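/- arXiv:2303.02365 — 8 statements merged into one kernel-verified Lean document; each statement's English description precedes it below -/
import Mathlib

section
/- Under the Bakhvalov-type mesh assumptions, the mesh width h_{N/2+2} satisfies σε/(4α) ≤ h_{N/2+2} ≤ σε/α. -/
open Real

/-- Bakhvalov-type mesh generating function evaluated at `t = j/N`:
`ψ(t) = 2τt` for `t < 1/2` and `ψ(t) = 1 + (σε/α)·ln(1 + 2(1-ε)(t-1))` for `t ≥ 1/2`,
where `τ = 1 + (σε/α)·ln ε`. -/
noncomputable def bX (α σ ε : ℝ) (N j : ℕ) : ℝ :=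
  if (j : ℝ) / N < 1 / 2 then
    2 * (1 + σ * ε / α * Real.log ε) * ((j : ℝ) / N)
  else
    1 + σ * ε / α * Real.log (1 + 2 * (1 - ε) * ((j : ℝ) / N - 1))


/-- On the Bakhvalov-type mesh, `σε/(4α) ≤ h_{N/2+2} ≤ σε/α`. -/
theorem statement2
    (α σ ε : ℝ) (hα : 0 < α) (hσ : 0 < σ) (hε : 0 < ε) (hε1 : ε < 1)
    (N : ℕ) (hN : 4 ≤ N) (hNe : Even N) (hεN : ε ≤ (N : ℝ)⁻¹)
    (hτ : (1:ℝ) / 2 ≤ 1 + σ * ε / α * Real.log ε) :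
    σ * ε / (4 * α) ≤ bX α σ ε N (N / 2 + 2) - bX α σ ε N (N / 2 + 1) ∧
    bX α σ ε N (N / 2 + 2) - bX α σ ε N (N / 2 + 1) ≤ σ * ε / α := by
  obtain ⟨M, rfl⟩ := hNe
  have hM2 : 2 ≤ M := by omega
  have hMR : (2:ℝ) ≤ (M:ℝ) := by exact_mod_cast hM2
  have hM0 : (0:ℝ) < M := by linarith
  have hMM0 : (0:ℝ) < (M:ℝ) + M := by linarith
  have e1 : (M + M) / 2 + 1 = M + 1 := by omega
  have e2 : (M + M) / 2 + 2 = M + 2 := by omega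
  rw [e1, e2]
  have hεM : ε * (2 * (M:ℝ)) ≤ 1 := by
    have h1 : ε ≤ ((M + M : ℕ):ℝ)⁻¹ := hεN
    have h2 : ((M + M : ℕ):ℝ)⁻¹ = 1 / (2 * (M:ℝ)) := by push_cast; rw [one_div]; ring_nf
    rw [h2] at h1
    calc ε * (2 * (M:ℝ)) ≤ 1 / (2 * (M:ℝ)) * (2 * (M:ℝ)) := by
          apply mul_le_mul_of_nonneg_right h1 (by positivity)
      _ = 1 := by field_simp
  have hc1 : ¬ (((M + 1 : ℕ):ℝ) / ((M + M : ℕ):ℝ) < 1 / 2) := by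
    push_cast
    rw [not_lt, le_div_iff₀ (by linarith)]
    linarith
  have hc2 : ¬ (((M + 2 : ℕ):ℝ) / ((M + M : ℕ):ℝ) < 1 / 2) := by
    push_cast
    rw [not_lt, le_div_iff₀ (by linarith)]
    linarith
  simp only [bX, if_neg hc1, if_neg hc2]
  set a1 : ℝ := ε + (1 - ε) / (M:ℝ) with ha1def
  set a2 : ℝ := ε + (1 - ε) * 2 / (M:ℝ) with ha2def
  have hMne : (M:ℝ) + M ≠ 0 := by linarith
  have ha1 : 1 + 2 * (1 - ε) * (((M + 1 : ℕ):ℝ) / ((M + M : ℕ):ℝ) - 1) = a1 := by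
    rw [ha1def]; push_cast
    field_simp
    ring
  have ha2 : 1 + 2 * (1 - ε) * (((M + 2 : ℕ):ℝ) / ((M + M : ℕ):ℝ) - 1) = a2 := by
    rw [ha2def]; push_cast
    field_simp
    ring
  rw [ha1, ha2]
  have hε1' : (0:ℝ) < 1 - ε := by linarith
  have ha1pos : 0 < a1 := by
    rw [ha1def]
    have : 0 < (1 - ε) / (M:ℝ) := div_pos hε1' hM0
    linarith
  have ha2pos : 0 < a2 := by
    rw [ha2def]
    have : 0 < (1 - ε) * 2 / (M:ℝ) := by positivity
    linarith
  -- upper bound on log difference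
  have hupper : Real.log a2 - Real.log a1 ≤ 1 := by
    have hle : a2 ≤ 2 * a1 := by
      rw [ha1def, ha2def]
      have : (1 - ε) * 2 / (M:ℝ) = 2 * ((1 - ε) / M) := by ring
      rw [this]
      linarith [hε.le]
    have h1 : Real.log a2 ≤ Real.log (2 * a1) := Real.log_le_log ha2pos hle
    rw [Real.log_mul two_ne_zero ha1pos.ne'] at h1
    have h2 : Real.log 2 < 1 := by
      have := Real.log_two_lt_d9
      linarith
    linarith
  -- lower bound on log difference
  have hεhalf : ε * (M:ℝ) ≤ 1 / 2 := by nlinarith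
  have hlower : 1 / 4 ≤ Real.log a2 - Real.log a1 := by
    have hd : (1 - ε) / (M:ℝ) * M = 1 - ε := div_mul_cancel₀ _ hM0.ne'
    have hεd : ε ≤ (1 - ε) / (M:ℝ) := by nlinarith [hεhalf, hεM]
    have hge : (3 / 2) * a1 ≤ a2 := by
      rw [ha1def, ha2def, show (1 - ε) * 2 / (M:ℝ) = 2 * ((1 - ε) / M) by ring]
      linarith
    have h1 : Real.log ((3 / 2) * a1) ≤ Real.log a2 :=
      Real.log_le_log (by positivity) hge
    rw [Real.log_mul (by norm_num) ha1pos.ne'] at h1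
    have hexp : Real.exp (1 / 4) ≤ 3 / 2 := by
      by_contra h
      push_neg at h
      have h4 : Real.exp ((1:ℝ) / 4) ^ (4:ℕ) = Real.exp 1 := by
        rw [← Real.exp_nat_mul]; norm_num
      have hlt : ((3:ℝ) / 2) ^ (4:ℕ) < Real.exp ((1:ℝ) / 4) ^ (4:ℕ) :=
        pow_lt_pow_left₀ h (by norm_num) (by norm_num)
      rw [h4] at hlt
      norm_num at hlt
      linarith [Real.exp_one_lt_d9]
    have h2 : (1:ℝ) / 4 ≤ Real.log (3 / 2) :=
      (Real.le_log_iff_exp_le (by norm_num)).mpr hexp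
    linarith
  have hc : 0 < σ * ε / α := by positivity
  constructor
  · have key : σ * ε / α * (1 / 4) ≤ σ * ε / α * (Real.log a2 - Real.log a1) :=
      mul_le_mul_of_nonneg_left hlower hc.le
    have heq : σ * ε / (4 * α) = σ * ε / α * (1 / 4) := by
      field_simp
    linarith [heq ▸ key]
  · have key : σ * ε / α * (Real.log a2 - Real.log a1) ≤ σ * ε / α * 1 :=
      mul_le_mul_of_nonneg_left hupper hc.le
    linarith
end

section
/- Under the Bakhvalov-type mesh assumptions, the mesh width h_{N/2+1} satisfies σε/(2α) ≤ h_{N/2+1} ≤ (2σ/α)·N⁻¹. -/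
open Real

set_option maxHeartbeats 1000000 in
/-- On the Bakhvalov-type mesh, `σε/(2α) ≤ h_{N/2+1} ≤ (2σ/α)·N⁻¹`. -/
theorem statement3
    (α σ ε : ℝ) (hα : 0 < α) (hσ : 0 < σ) (hε : 0 < ε) (hε1 : ε < 1)
    (N : ℕ) (hN : 4 ≤ N) (hNe : Even N) (hεN : ε ≤ (N : ℝ)⁻¹)
    (hτ : (1:ℝ) / 2 ≤ 1 + σ * ε / α * Real.log ε) :
    σ * ε / (2 * α) ≤ bX α σ ε N (N / 2 + 1) - bX α σ ε N (N / 2) ∧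
    bX α σ ε N (N / 2 + 1) - bX α σ ε N (N / 2) ≤ 2 * σ / α * (N : ℝ)⁻¹ := by
  have hN4 : (4:ℝ) ≤ N := by exact_mod_cast hN
  have hNr : (0:ℝ) < N := by linarith
  have hm2 : N / 2 * 2 = N := Nat.div_two_mul_two_of_even hNe
  have hmr : ((N / 2 : ℕ) : ℝ) * 2 = (N : ℝ) := by exact_mod_cast congrArg (Nat.cast : ℕ → ℝ) hm2
  have hhalf : ((N / 2 : ℕ) : ℝ) = (N : ℝ) / 2 := by linarith
  have h1 : ((N / 2 : ℕ) : ℝ) / N = 1 / 2 := by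
    rw [hhalf]; field_simp
  have h2 : ((N / 2 + 1 : ℕ) : ℝ) / N = 1 / 2 + 1 / N := by
    push_cast [hhalf]; field_simp
  have hεN' : ε * N ≤ 1 := by
    have h := mul_le_mul_of_nonneg_right hεN hNr.le
    rwa [inv_mul_cancel₀ hNr.ne'] at h
  have hε4 : ε ≤ 1 / 4 := by nlinarith
  have h1ε : 0 < 1 - ε := by linarith
  have hA : 0 < ε + 2 * (1 - ε) / N := by
    have : 0 < 2 * (1 - ε) / N := div_pos (by linarith) hNr
    linarith
  -- unfold bX
  rw [bX, bX, h1, h2, if_neg (lt_irrefl _), if_neg (by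
    have : 0 < 1 / (N:ℝ) := by positivity
    linarith)]
  have e1 : 1 + 2 * (1 - ε) * (1 / 2 + 1 / (N:ℝ) - 1) = ε + 2 * (1 - ε) / N := by ring
  have e2 : 1 + 2 * (1 - ε) * ((1:ℝ) / 2 - 1) = ε := by ring
  rw [e1, e2]
  have hc : 0 < σ * ε / α := by positivity
  have hdiff : (1 + σ * ε / α * Real.log (ε + 2 * (1 - ε) / N)) -
      (1 + σ * ε / α * Real.log ε)
      = σ * ε / α * Real.log ((ε + 2 * (1 - ε) / N) / ε) := by
    rw [Real.log_div hA.ne' hε.ne']; ring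
  rw [hdiff]
  have hd : 2 * (1 - ε) / (N:ℝ) * N = 2 * (1 - ε) := div_mul_cancel₀ _ hNr.ne'
  have hratio : (5:ℝ) / 2 ≤ (ε + 2 * (1 - ε) / N) / ε := by
    rw [le_div_iff₀ hε]
    nlinarith [hd, hεN', hε4, hNr, mul_pos hε hNr]
  have hratpos : 0 < (ε + 2 * (1 - ε) / N) / ε := div_pos hA hε
  constructor
  · -- lower bound
    have hexp : Real.exp (1 / 2) ≤ 5 / 2 := by
      have hsq : Real.exp (1/2) * Real.exp (1/2) = Real.exp 1 := by
        rw [← Real.exp_add]; norm_num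
      nlinarith [Real.exp_one_lt_d9, Real.exp_pos ((1:ℝ)/2)]
    have hlog : (1:ℝ) / 2 ≤ Real.log ((ε + 2 * (1 - ε) / N) / ε) :=
      (Real.le_log_iff_exp_le hratpos).mpr (by linarith)
    have := mul_le_mul_of_nonneg_left hlog hc.le
    calc σ * ε / (2 * α) = σ * ε / α * (1/2) := by field_simp
      _ ≤ σ * ε / α * Real.log ((ε + 2 * (1 - ε) / N) / ε) := this
  · -- upper bound
    have hlog : Real.log ((ε + 2 * (1 - ε) / N) / ε) ≤ (ε + 2 * (1 - ε) / N) / ε - 1 :=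
      Real.log_le_sub_one_of_pos hratpos
    have h3 : σ * ε / α * Real.log ((ε + 2 * (1 - ε) / N) / ε)
        ≤ σ * ε / α * ((ε + 2 * (1 - ε) / N) / ε - 1) :=
      mul_le_mul_of_nonneg_left hlog hc.le
    have h4 : σ * ε / α * ((ε + 2 * (1 - ε) / N) / ε - 1) ≤ 2 * σ / α * (N:ℝ)⁻¹ := by
      have heq : (ε + 2 * (1 - ε) / N) / ε - 1 = 2 * (1 - ε) / (N * ε) := by
        field_simp; ring
      rw [heq]
      have : σ * ε / α * (2 * (1 - ε) / (N * ε)) = 2 * σ * (1 - ε) / (α * N) := by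
        field_simp
      rw [this, div_le_iff₀ (by positivity)]
      have : 2 * σ / α * (N:ℝ)⁻¹ * (α * N) = 2 * σ := by field_simp
      rw [this]
      nlinarith [mul_pos hσ hε]
    linarith
end

section
/- Under the Bakhvalov-type mesh assumptions, there exists a constant C > 0 depending only on σ and α (not on ε or N) such that x_{N/2+1} ≤ 1 − C·(σε/α)·ln N. -/
/-!
For even `N` the point `x_{N/2+1}` is the first one in the logarithmic part of the mesh, and
`x_{N/2+1} = 1 + (σε/α) ln (ε + 2(1-ε)/N)`. Since `ε ≤ 1/N`, the argument of the logarithm is at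
most `3/N`, and `ln (3/N) ≤ -(1 - ln 3 / ln 4) ln N` as soon as `N ≥ 4`.
-/

open Real

lemma bX_half_add_one (α σ ε : ℝ) {N : ℕ} (hN : 0 < N) (hNe : Even N) :
    bX α σ ε N (N / 2 + 1) = 1 + σ * ε / α * log (ε + 2 * (1 - ε) / N) := by
  have hNR : (0 : ℝ) < N := by exact_mod_cast hN
  have ht : ((N / 2 + 1 : ℕ) : ℝ) / N = 1 / 2 + 1 / N := by
    obtain ⟨m, rfl⟩ := hNe
    rw [← two_mul, Nat.mul_div_cancel_left m two_pos]
    have hm : (m : ℝ) ≠ 0 := by exact_mod_cast (by omega : m ≠ 0)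
    push_cast
    field_simp
  have hge : ¬ ((N / 2 + 1 : ℕ) : ℝ) / N < 1 / 2 := by
    rw [ht]
    linarith [one_div_pos.mpr hNR]
  rw [bX, if_neg hge, ht]
  congr 3
  field_simp
  ring

lemma log_div_le_neg_mul_log {a b x : ℝ} (hb : 1 ≤ b) (ha : 1 < a) (hax : a ≤ x) :
    log (b / x) ≤ -((1 - log b / log a) * log x) := by
  have hloga : 0 < log a := log_pos ha
  have hlogb : 0 ≤ log b := log_nonneg hb
  have hlogx : log a ≤ log x := log_le_log (by linarith) hax
  have hscaled : log b ≤ log b / log a * log x := by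
    rw [div_mul_eq_mul_div, le_div_iff₀ hloga]
    exact mul_le_mul_of_nonneg_left hlogx hlogb
  rw [log_div (by linarith) (by linarith)]
  linarith

/-- There is a constant `C > 0` depending only on `σ` and `α`
such that `x_{N/2+1} ≤ 1 − C·(σε/α)·ln N` on the Bakhvalov-type mesh. -/
theorem statement5 (α σ : ℝ) (hα : 0 < α) (hσ : 0 < σ) :
    ∃ C > (0:ℝ), ∀ ε : ℝ, 0 < ε → ε < 1 →
      ∀ N : ℕ, 4 ≤ N → Even N → ε ≤ (N : ℝ)⁻¹ →
        (1:ℝ) / 2 ≤ 1 + σ * ε / α * Real.log ε →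
        bX α σ ε N (N / 2 + 1) ≤ 1 - C * (σ * ε / α) * Real.log N := by
  refine ⟨1 - log 3 / log 4, ?_, ?_⟩
  · rw [gt_iff_lt, sub_pos, div_lt_one (log_pos (by norm_num))]
    exact log_lt_log (by norm_num) (by norm_num)
  intro ε hε hε1 N hN4 hNe hεN _
  have hNR : (4 : ℝ) ≤ N := by exact_mod_cast hN4
  have hu_pos : 0 < ε + 2 * (1 - ε) / N := by
    have : 0 < 2 * (1 - ε) / N := by apply div_pos <;> linarith
    linarith
  have hu_le : ε + 2 * (1 - ε) / N ≤ 3 / N := by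
    rw [inv_eq_one_div] at hεN
    have : 2 * (1 - ε) / N ≤ 2 / N := by gcongr; linarith
    linarith [show (1 : ℝ) / N + 2 / N = 3 / N by ring]
  calc bX α σ ε N (N / 2 + 1) = 1 + σ * ε / α * log (ε + 2 * (1 - ε) / N) :=
        bX_half_add_one α σ ε (by omega) hNe
    _ ≤ 1 + σ * ε / α * log (3 / N) := by gcongr
    _ ≤ 1 + σ * ε / α * -((1 - log 3 / log 4) * log N) := by
        gcongr
        exact log_div_le_neg_mul_log (by norm_num) (by norm_num) hNR
    _ = 1 - (1 - log 3 / log 4) * (σ * ε / α) * log N := by ring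
end

section
/- Under the Bakhvalov-type mesh assumptions, there exists a constant C > 0 depending only on σ and α (not on ε or N) such that for every integer j with N/2+2 ≤ j ≤ N, every real λ with 0 ≤ λ ≤ σ, and every x ∈ I_j: h_j^λ · e^(−α(1−x)/ε) ≤ h_j^λ · e^(−α(1−x_j)/ε) ≤ C ε^λ N^(−λ). -/
/-!
The Bakhvalov mesh is built by inverting the layer function: writing
`A(t) = meshArg ε t = 1 + 2(1-ε)(t-1)`, the layer points are `x_j = 1 + (σε/α) log A(j/N)`,
so that `e^{-α(1-x_j)/ε} = A(j/N)^σ` and `h_j = (σε/α) log (A(j/N) / A((j-1)/N))`.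
By `log y ≤ y - 1`, `h_j ≤ (σε/α) (A(j/N) - A((j-1)/N)) / A((j-1)/N)`. The increment
`A(j/N) - A((j-1)/N) = 2(1-ε)/N` is at most `2/N`, and since `(j-1)/N ≥ 1/2 + 1/N` it is also
at most `A((j-1)/N)`, so `A(j/N) ≤ 2 A((j-1)/N)` and `h_j A(j/N) ≤ 4σε/(αN)`. Since `A ≤ 1` and
`λ ≤ σ`, finally `h_j^λ A(j/N)^σ ≤ (h_j A(j/N))^λ`.
-/

open Real

def meshArg (ε t : ℝ) : ℝ := 1 + 2 * (1 - ε) * (t - 1)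

lemma bX_eq_of_half_le {α σ ε : ℝ} {N j : ℕ} (h : 1 / 2 ≤ (j : ℝ) / N) :
    bX α σ ε N j = 1 + σ * ε / α * log (meshArg ε ((j : ℝ) / N)) := by
  rw [bX, if_neg h.not_gt, meshArg]

lemma meshArg_eq (ε t : ℝ) : meshArg ε t = ε + 2 * (1 - ε) * (t - 1 / 2) := by
  rw [meshArg]; ring

lemma meshArg_sub_meshArg (ε t s : ℝ) : meshArg ε t - meshArg ε s = 2 * (1 - ε) * (t - s) := by
  simp only [meshArg]; ring

lemma meshArg_pos {ε t : ℝ} (hε : 0 < ε) (hε1 : ε ≤ 1) (ht : 1 / 2 ≤ t) : 0 < meshArg ε t := by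
  rw [meshArg_eq]; nlinarith

lemma meshArg_le_one {ε t : ℝ} (hε : ε ≤ 1) (ht : t ≤ 1) : meshArg ε t ≤ 1 := by
  rw [meshArg]; nlinarith

lemma exp_layer_eq_rpow {α σ ε A : ℝ} (hα : α ≠ 0) (hε : ε ≠ 0) (hA : 0 < A) :
    exp (-(α * (1 - (1 + σ * ε / α * log A))) / ε) = A ^ σ := by
  rw [rpow_def_of_pos hA]
  congr 1
  field_simp
  ring

lemma log_sub_log_mul_le {A B : ℝ} (hA : 0 < A) (hB : 0 < B) :
    (log A - log B) * A ≤ (A - B) * (A / B) := by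
  have hlog : log A - log B ≤ (A - B) / B := by
    rw [← log_div hA.ne' hB.ne', sub_div, div_self hB.ne']
    exact log_le_sub_one_of_pos (div_pos hA hB)
  calc (log A - log B) * A ≤ (A - B) / B * A := by gcongr
    _ = (A - B) * (A / B) := by ring

lemma rpow_mul_rpow_le_mul_rpow {h A lam σ : ℝ} (hh : 0 ≤ h) (hA : 0 < A) (hA1 : A ≤ 1)
    (hlamσ : lam ≤ σ) : h ^ lam * A ^ σ ≤ (h * A) ^ lam := by
  rw [mul_rpow hh hA.le]
  exact mul_le_mul_of_nonneg_left (rpow_le_rpow_of_exponent_ge hA hA1 hlamσ) (rpow_nonneg hh _)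

lemma rpow_le_max_one_rpow_mul_rpow {y K z lam σ : ℝ} (hy : 0 ≤ y) (hK : 0 ≤ K) (hz : 0 ≤ z)
    (hyKz : y ≤ K * z) (hlam : 0 ≤ lam) (hlamσ : lam ≤ σ) :
    y ^ lam ≤ max 1 K ^ σ * z ^ lam :=
  calc y ^ lam ≤ (K * z) ^ lam := rpow_le_rpow hy hyKz hlam
    _ = K ^ lam * z ^ lam := mul_rpow hK hz
    _ ≤ max 1 K ^ lam * z ^ lam := by gcongr; exact le_max_right _ _
    _ ≤ max 1 K ^ σ * z ^ lam := by gcongr; exact le_max_left _ _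

lemma layer_step_mul_meshArg_le {α σ ε N s t : ℝ} (hα : 0 < α) (hσ : 0 ≤ σ) (hε : 0 < ε)
    (hε1 : ε < 1) (hN : 0 < N) (hs : 1 / 2 + 1 / N ≤ s) (hts : t - s = 1 / N) :
    σ * ε / α * (log (meshArg ε t) - log (meshArg ε s)) * meshArg ε t ≤
      4 * σ / α * (ε / N) := by
  have hs' : 1 / 2 ≤ s := by linarith [one_div_pos.2 hN]
  have hA0 := meshArg_pos hε hε1.le (show 1 / 2 ≤ t by linarith [one_div_pos.2 hN])
  have hB0 := meshArg_pos hε hε1.le hs'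
  have hstep : meshArg ε t - meshArg ε s = 2 * (1 - ε) / N := by
    rw [meshArg_sub_meshArg, hts]; ring
  have hstep_le : 2 * (1 - ε) / N ≤ 2 / N := by gcongr; linarith
  have hstep_le_B : 2 * (1 - ε) / N ≤ meshArg ε s := by
    have : 2 * (1 - ε) / N ≤ 2 * (1 - ε) * (s - 1 / 2) := by
      rw [div_eq_mul_one_div]; gcongr; linarith
    rw [meshArg_eq]; linarith
  have hratio : meshArg ε t / meshArg ε s ≤ 2 := by
    rw [div_le_iff₀ hB0]; linarith
  have hcoef : 0 ≤ σ * ε / α := by positivity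
  calc σ * ε / α * (log (meshArg ε t) - log (meshArg ε s)) * meshArg ε t
      = σ * ε / α * ((log (meshArg ε t) - log (meshArg ε s)) * meshArg ε t) := by ring
    _ ≤ σ * ε / α * ((meshArg ε t - meshArg ε s) * (meshArg ε t / meshArg ε s)) := by
      gcongr ?_ * ?_
      exact log_sub_log_mul_le hA0 hB0
    _ ≤ σ * ε / α * (2 / N * 2) := by
      gcongr ?_ * ?_
      rw [hstep]
      exact mul_le_mul hstep_le hratio (by positivity) (by positivity)
    _ = 4 * σ / α * (ε / N) := by ring

lemma one_half_add_inv_le_pred_div {N j : ℕ} (hN : 0 < N) (hNe : Even N) (hj : N / 2 + 2 ≤ j) :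
    1 / 2 + 1 / (N : ℝ) ≤ ((j - 1 : ℕ) : ℝ) / N := by
  obtain ⟨k, rfl⟩ := hNe
  have hN' : (0 : ℝ) < (k + k : ℕ) := by exact_mod_cast hN
  have hjk : ((k + 1 : ℕ) : ℝ) ≤ ((j - 1 : ℕ) : ℝ) := by
    exact_mod_cast (show k + 1 ≤ j - 1 by omega)
  rw [le_div_iff₀ hN', add_mul, one_div_mul_cancel hN'.ne']
  push_cast at hjk ⊢
  linarith

lemma exp_layer_bX_eq {α σ ε : ℝ} {N j : ℕ} (hα : α ≠ 0) (hε : 0 < ε) (hε1 : ε ≤ 1)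
    (ht : 1 / 2 ≤ (j : ℝ) / N) :
    exp (-(α * (1 - bX α σ ε N j)) / ε) = meshArg ε ((j : ℝ) / N) ^ σ := by
  rw [bX_eq_of_half_le ht, exp_layer_eq_rpow hα hε.ne' (meshArg_pos hε hε1 ht)]

lemma bX_sub_bX_pred_mul_meshArg_le {α σ ε : ℝ} {N j : ℕ} (hα : 0 < α) (hσ : 0 ≤ σ)
    (hε : 0 < ε) (hε1 : ε < 1) (hN : 0 < N) (hNe : Even N) (hj : N / 2 + 2 ≤ j) :
    (bX α σ ε N j - bX α σ ε N (j - 1)) * meshArg ε ((j : ℝ) / N) ≤ 4 * σ / α * (ε / N) := by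
  have hN' : (0 : ℝ) < N := by exact_mod_cast hN
  have hs := one_half_add_inv_le_pred_div hN hNe hj
  have hts : (j : ℝ) / N - ((j - 1 : ℕ) : ℝ) / N = 1 / N := by
    rw [Nat.cast_sub (by omega : 1 ≤ j)]; ring
  have hs' : 1 / 2 ≤ ((j - 1 : ℕ) : ℝ) / N := by linarith [one_div_pos.2 hN']
  rw [bX_eq_of_half_le (by linarith [one_div_pos.2 hN']), bX_eq_of_half_le hs',
    add_sub_add_left_eq_sub, ← mul_sub]
  exact layer_step_mul_meshArg_le hα hσ hε hε1 hN' hs hts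

theorem statement6_general (α σ : ℝ) (hα : 0 < α) :
    ∃ C > (0:ℝ), ∀ ε : ℝ, 0 < ε → ε < 1 →
      ∀ N : ℕ, 4 ≤ N → Even N → ε ≤ (N : ℝ)⁻¹ →
        (1:ℝ) / 2 ≤ 1 + σ * ε / α * Real.log ε →
        ∀ j : ℕ, N / 2 + 2 ≤ j → j ≤ N →
          ∀ lam : ℝ, 0 ≤ lam → lam ≤ σ →
            ∀ x ∈ Set.Icc (bX α σ ε N (j - 1)) (bX α σ ε N j),
              (bX α σ ε N j - bX α σ ε N (j - 1)) ^ lam *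
                  Real.exp (-(α * (1 - x)) / ε) ≤
                (bX α σ ε N j - bX α σ ε N (j - 1)) ^ lam *
                  Real.exp (-(α * (1 - bX α σ ε N j)) / ε) ∧
              (bX α σ ε N j - bX α σ ε N (j - 1)) ^ lam *
                  Real.exp (-(α * (1 - bX α σ ε N j)) / ε) ≤
                C * ε ^ lam * (N : ℝ) ^ (-lam) := by
  refine ⟨max 1 (4 * σ / α) ^ σ, by positivity, ?_⟩
  intro ε hε hε1 N hN4 hNe _ _ j hjN hj lam hlam hlamσ x hx
  have hσ : 0 ≤ σ := hlam.trans hlamσ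
  have hh : 0 ≤ bX α σ ε N j - bX α σ ε N (j - 1) := sub_nonneg.2 (hx.1.trans hx.2)
  refine ⟨by gcongr; exact hx.2, ?_⟩
  have hN : (0 : ℝ) < N := by exact_mod_cast (show 0 < N by omega)
  have ht : 1 / 2 ≤ (j : ℝ) / N := by
    have : (N : ℝ) ≤ 2 * j := by exact_mod_cast (show N ≤ 2 * j by omega)
    rw [le_div_iff₀ hN]; linarith
  have hA0 := meshArg_pos hε hε1.le ht
  have hA1 := meshArg_le_one hε1.le ((div_le_one hN).2 (by exact_mod_cast hj : (j : ℝ) ≤ N))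
  have hstep := bX_sub_bX_pred_mul_meshArg_le hα hσ hε hε1 (by omega) hNe hjN
  rw [exp_layer_bX_eq hα.ne' hε hε1.le ht]
  calc _ ≤ ((bX α σ ε N j - bX α σ ε N (j - 1)) * meshArg ε ((j : ℝ) / N)) ^ lam :=
        rpow_mul_rpow_le_mul_rpow hh hA0 hA1 hlamσ
    _ ≤ max 1 (4 * σ / α) ^ σ * (ε / N) ^ lam :=
        rpow_le_max_one_rpow_mul_rpow (mul_nonneg hh hA0.le) (by positivity) (by positivity)
          hstep hlam hlamσ
    _ = _ := by rw [div_rpow hε.le hN.le, rpow_neg hN.le]; ring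

/-- There is a constant `C > 0` depending only on `σ` and `α` such that
for `N/2+2 ≤ j ≤ N`, `0 ≤ λ ≤ σ` and `x ∈ I_j`,
`h_j^λ e^{−α(1−x)/ε} ≤ h_j^λ e^{−α(1−x_j)/ε} ≤ C ε^λ N^{−λ}`. -/
theorem statement6 (α σ : ℝ) (hα : 0 < α) (hσ : 0 < σ) :
    ∃ C > (0:ℝ), ∀ ε : ℝ, 0 < ε → ε < 1 →
      ∀ N : ℕ, 4 ≤ N → Even N → ε ≤ (N : ℝ)⁻¹ →
        (1:ℝ) / 2 ≤ 1 + σ * ε / α * Real.log ε →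
        ∀ j : ℕ, N / 2 + 2 ≤ j → j ≤ N →
          ∀ lam : ℝ, 0 ≤ lam → lam ≤ σ →
            ∀ x ∈ Set.Icc (bX α σ ε N (j - 1)) (bX α σ ε N j),
              (bX α σ ε N j - bX α σ ε N (j - 1)) ^ lam *
                  Real.exp (-(α * (1 - x)) / ε) ≤
                (bX α σ ε N j - bX α σ ε N (j - 1)) ^ lam *
                  Real.exp (-(α * (1 - bX α σ ε N j)) / ε) ∧
              (bX α σ ε N j - bX α σ ε N (j - 1)) ^ lam *
                  Real.exp (-(α * (1 - bX α σ ε N j)) / ε) ≤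
                C * ε ^ lam * (N : ℝ) ^ (-lam) :=
  statement6_general α σ hα
end

section
/- Suppose E : [0,1] → ℝ satisfies |E(x)| ≤ C₁ e^(−α(1−x)/ε) for all x ∈ [0,1] and some constant C₁ > 0. Then, under the Bakhvalov-type mesh assumptions, there exists a constant C > 0 depending only on C₁, σ and α (not on ε or N) such that |E(x_{N/2+1})| ≤ C N^(−σ) and |E(x_{N/2})| ≤ C ε^σ. -/
open Real

/-- If `|E(x)| ≤ C₁ e^{−α(1−x)/ε}` on `[0,1]`, then on the
Bakhvalov-type mesh `|E(x_{N/2+1})| ≤ C N^{−σ}` and `|E(x_{N/2})| ≤ C ε^σ`,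
with `C` depending only on `C₁`, `σ` and `α`. -/
theorem statement7 (α σ C₁ : ℝ) (hα : 0 < α) (hσ : 0 < σ) (hC₁ : 0 < C₁) :
    ∃ C > (0:ℝ), ∀ ε : ℝ, 0 < ε → ε < 1 →
      ∀ N : ℕ, 4 ≤ N → Even N → ε ≤ (N : ℝ)⁻¹ →
        (1:ℝ) / 2 ≤ 1 + σ * ε / α * Real.log ε →
        ∀ E : ℝ → ℝ,
          (∀ x ∈ Set.Icc (0:ℝ) 1, |E x| ≤ C₁ * Real.exp (-(α * (1 - x)) / ε)) →
          |E (bX α σ ε N (N / 2 + 1))| ≤ C * (N : ℝ) ^ (-σ) ∧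
          |E (bX α σ ε N (N / 2))| ≤ C * ε ^ σ := by
  refine ⟨C₁ * (3:ℝ) ^ σ, by positivity, ?_⟩
  intro ε hε hε1 N hN4 hNeven hεN hτ E hE
  obtain ⟨m, hm⟩ := hNeven
  have hm2 : N = 2 * m := by omega
  have hmN : N / 2 = m := by omega
  have hmpos : 0 < m := by omega
  have hN4R : (4:ℝ) ≤ N := by exact_mod_cast hN4
  have hNpos : (0:ℝ) < N := by linarith
  have hNR : (N:ℝ) = 2 * m := by exact_mod_cast hm2
  have hmR : (0:ℝ) < m := by exact_mod_cast hmpos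
  have hhalf : (m:ℝ) / N = 1/2 := by rw [hNR]; field_simp
  have hcε : 0 < σ * ε / α := by positivity
  -- the two mesh points
  have hx0 : bX α σ ε N (N/2) = 1 + σ * ε / α * Real.log ε := by
    rw [hmN, bX, if_neg (by rw [hhalf]; norm_num)]
    rw [hhalf]
    have h : 1 + 2 * (1 - ε) * ((1:ℝ)/2 - 1) = ε := by ring
    rw [h]
  set y : ℝ := ε + 2 * (1 - ε) / N with hy_def
  have hx1 : bX α σ ε N (N/2 + 1) = 1 + σ * ε / α * Real.log y := by
    rw [hmN, bX]
    have hc : ((m:ℝ) + 1) / N = 1/2 + 1/N := by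
      rw [hNR]; field_simp
    have hNinv : (0:ℝ) < 1/N := by positivity
    have hcond : ¬ (((m + 1 : ℕ):ℝ) / N < 1/2) := by
      push_cast
      rw [hc]
      linarith
    rw [if_neg hcond]
    have harg : 1 + 2 * (1 - ε) * (((m + 1 : ℕ):ℝ) / N - 1) = y := by
      push_cast
      rw [hy_def, hNR]
      field_simp
      ring
    rw [harg]
  -- basic facts about y
  have hεN' : ε ≤ 1 / (N:ℝ) := by rwa [one_div]
  have hypos : 0 < y := by
    have h : 0 < 2 * (1 - ε) / N := div_pos (by linarith) hNpos
    simp only [hy_def]; linarith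
  have hy3N : y ≤ 3 / N := by
    have h1 : 2 * (1 - ε) / N ≤ 2 / N := by
      gcongr
      linarith
    have h2 : (1:ℝ)/N + 2/N = 3/N := by ring
    simp only [hy_def]; linarith
  have hy1 : y ≤ 1 := by
    have h34 : (3:ℝ)/N ≤ 3/4 := by
      rw [div_le_div_iff₀ hNpos (by norm_num)]
      linarith
    calc y ≤ 3 / N := hy3N
      _ ≤ 3/4 := h34
      _ ≤ 1 := by norm_num
  have hεy : ε ≤ y := by
    have h : 0 ≤ 2 * (1 - ε) / N := by
      apply div_nonneg _ hNpos.le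
      linarith
    simp only [hy_def]; linarith
  have hlogy_le : Real.log y ≤ 0 := Real.log_nonpos hypos.le hy1
  have hlogεy : Real.log ε ≤ Real.log y := Real.log_le_log hε hεy
  -- generic bound: for 0 < z ≤ 1 with x = 1 + (σε/α) log z in [0,1],
  -- |E x| ≤ C₁ * z ^ σ
  have key : ∀ z : ℝ, 0 < z → z ≤ 1 → Real.log ε ≤ Real.log z →
      |E (1 + σ * ε / α * Real.log z)| ≤ C₁ * z ^ σ := by
    intro z hz hz1 hlz
    have hlogz_le : Real.log z ≤ 0 := Real.log_nonpos hz.le hz1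
    have hmem : (1 + σ * ε / α * Real.log z) ∈ Set.Icc (0:ℝ) 1 := by
      constructor
      · have h1 : σ * ε / α * Real.log ε ≤ σ * ε / α * Real.log z :=
          mul_le_mul_of_nonneg_left hlz hcε.le
        linarith
      · nlinarith [mul_nonpos_of_nonneg_of_nonpos hcε.le hlogz_le]
    have hb := hE _ hmem
    have hexp : -(α * (1 - (1 + σ * ε / α * Real.log z))) / ε = σ * Real.log z := by
      field_simp
      ring
    rw [hexp] at hb
    rwa [mul_comm σ (Real.log z), ← Real.rpow_def_of_pos hz] at hb
  constructor
  · rw [hx1]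
    have h := key y hypos hy1 hlogεy
    have h2 : y ^ σ ≤ (3 / N) ^ σ := Real.rpow_le_rpow hypos.le hy3N hσ.le
    have h3 : ((3:ℝ) / N) ^ σ = 3 ^ σ * (N:ℝ) ^ (-σ) := by
      rw [Real.div_rpow (by norm_num) hNpos.le, Real.rpow_neg hNpos.le, div_eq_mul_inv]
    calc |E (1 + σ * ε / α * Real.log y)| ≤ C₁ * y ^ σ := h
      _ ≤ C₁ * ((3:ℝ)/N) ^ σ := by gcongr
      _ = C₁ * 3 ^ σ * (N:ℝ) ^ (-σ) := by rw [h3]; ring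
  · rw [hx0]
    have h := key ε hε hε1.le le_rfl
    have h1 : (1:ℝ) ≤ (3:ℝ) ^ σ := Real.one_le_rpow (by norm_num) hσ.le
    calc |E (1 + σ * ε / α * Real.log ε)| ≤ C₁ * ε ^ σ := h
      _ = C₁ * 1 * ε ^ σ := by ring
      _ ≤ C₁ * 3 ^ σ * ε ^ σ := by gcongr
end

section
/- Let a < b be real numbers, let k ≥ 1 be an integer, and let w : [a,b] → ℝ be continuous. Then there exists a unique real polynomial p of degree at most k such that ∫_a^b (p(x) − w(x)) q(x) dx = 0 for every real polynomial q of degree at most k−1, and p(b) = w(b). -/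
open MeasureTheory Polynomial Set

private lemma key_inj (a b : ℝ) (hab : a < b) (k : ℕ)
    (p : Polynomial ℝ) (hdeg : p.natDegree ≤ k)
    (horth : ∀ q : Polynomial ℝ, q.natDegree ≤ k - 1 →
      ∫ x in a..b, p.eval x * q.eval x = 0)
    (hb : p.eval b = 0) : p = 0 := by
  by_contra hp
  obtain ⟨r, hr⟩ := Polynomial.dvd_iff_isRoot.mpr hb
  have hr0 : r ≠ 0 := fun h => hp (by simp [hr, h])
  have hXb : (X - C b : Polynomial ℝ) ≠ 0 := Polynomial.X_sub_C_ne_zero b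
  have hrdeg : r.natDegree ≤ k - 1 := by
    have h1 : p.natDegree = 1 + r.natDegree := by
      rw [hr, Polynomial.natDegree_mul hXb hr0, Polynomial.natDegree_X_sub_C]
    omega
  have h0 := horth r hrdeg
  set f : ℝ → ℝ := fun x => (b - x) * (r.eval x) ^ 2 with hfdef
  have hfc : Continuous f := by fun_prop
  have hint : ∫ x in a..b, f x = 0 := by
    have heq : ∀ x : ℝ, f x = -(p.eval x * r.eval x) := fun x => by
      simp only [hfdef, hr, Polynomial.eval_mul, Polynomial.eval_sub, Polynomial.eval_X,
        Polynomial.eval_C]; ring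
    simp_rw [heq]
    rw [intervalIntegral.integral_neg, h0, neg_zero]
  have hnonneg : 0 ≤ᵐ[volume.restrict (Set.Ioc a b)] f := by
    refine (ae_restrict_iff' measurableSet_Ioc).mpr (ae_of_all _ fun x hx => ?_)
    exact mul_nonneg (by linarith [hx.2]) (sq_nonneg _)
  have hfi : IntervalIntegrable f volume a b := hfc.intervalIntegrable a b
  have hae : f =ᵐ[volume.restrict (Set.Ioc a b)] 0 :=
    (intervalIntegral.integral_eq_zero_iff_of_le_of_nonneg_ae hab.le hnonneg hfi).mp hint
  have h1 : volume ({x | f x ≠ 0} ∩ Set.Ioc a b) = 0 := by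
    have := ae_iff.mp hae
    rwa [Measure.restrict_apply' measurableSet_Ioc] at this
  have hsub : {x | f x = 0} ⊆ {b} ∪ {x | r.IsRoot x} := by
    intro x hx
    rcases mul_eq_zero.mp hx with h | h
    · left; have : x = b := by linarith [sub_eq_zero.mp h]
      simp [this]
    · right; exact pow_eq_zero_iff (n := 2) (by norm_num) |>.mp h
  have h2 : volume ({x | f x = 0} ∩ Set.Ioc a b) = 0 :=
    measure_mono_null (fun x hx => hsub hx.1)
      (((Set.finite_singleton b).union (Polynomial.finite_setOf_isRoot hr0)).measure_zero _)
  have hcover : Set.Ioc a b ⊆ ({x | f x ≠ 0} ∩ Set.Ioc a b) ∪ ({x | f x = 0} ∩ Set.Ioc a b) := by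
    intro x hx
    by_cases h : f x = 0
    · exact Or.inr ⟨h, hx⟩
    · exact Or.inl ⟨h, hx⟩
  have : volume (Set.Ioc a b) = 0 :=
    le_antisymm ((measure_mono hcover).trans ((measure_union_le _ _).trans
      (by rw [h1, h2]; simp))) zero_le
  rw [Real.volume_Ioc] at this
  simp [ENNReal.ofReal_eq_zero] at this
  linarith

private lemma expand_int (a b : ℝ) (k : ℕ) (f : ℝ → ℝ)
    (hf : ∀ i : ℕ, IntervalIntegrable (fun x => f x * x ^ i) volume a b)
    (q : Polynomial ℝ) (hq : q.natDegree < k) :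
    ∫ x in a..b, f x * q.eval x
      = ∑ i ∈ Finset.range k, q.coeff i * ∫ x in a..b, f x * x ^ i := by
  have heq : ∀ x : ℝ, f x * q.eval x
      = ∑ i ∈ Finset.range k, q.coeff i * (f x * x ^ i) := fun x => by
    rw [Polynomial.eval_eq_sum_range' hq, Finset.mul_sum]
    exact Finset.sum_congr rfl fun i _ => by ring
  simp_rw [heq]
  rw [intervalIntegral.integral_finset_sum (fun i _ => (hf i).const_mul _)]
  simp_rw [intervalIntegral.integral_const_mul]

private lemma poly_int (a b : ℝ) (r : Polynomial ℝ) (i : ℕ) :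
    IntervalIntegrable (fun x => r.eval x * x ^ i) volume a b :=
  (r.continuous.mul (continuous_pow i)).intervalIntegrable a b

private noncomputable def Tmap (a b : ℝ) (k : ℕ) :
    Polynomial.degreeLT ℝ (k + 1) →ₗ[ℝ] (Fin k → ℝ) × ℝ where
  toFun p := (fun i => ∫ x in a..b, (p : Polynomial ℝ).eval x * x ^ (i : ℕ),
    (p : Polynomial ℝ).eval b)
  map_add' p q := by
    refine Prod.ext ?_ (by simp)
    funext i
    simp only [Submodule.coe_add, Polynomial.eval_add, Prod.fst_add, Pi.add_apply]
    rw [show (fun x => ((p : Polynomial ℝ).eval x + (q : Polynomial ℝ).eval x) * x ^ (i : ℕ))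
        = fun x => (p : Polynomial ℝ).eval x * x ^ (i : ℕ)
          + (q : Polynomial ℝ).eval x * x ^ (i : ℕ) from funext fun x => by ring]
    exact intervalIntegral.integral_add (poly_int a b _ _) (poly_int a b _ _)
  map_smul' c p := by
    refine Prod.ext ?_ (by simp)
    funext i
    simp only [Submodule.coe_smul, Polynomial.eval_smul, smul_eq_mul, RingHom.id_apply,
      Prod.smul_fst, Pi.smul_apply]
    rw [show (fun x => c * (p : Polynomial ℝ).eval x * x ^ (i : ℕ))
        = fun x => c * ((p : Polynomial ℝ).eval x * x ^ (i : ℕ)) from funext fun x => by ring]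
    rw [intervalIntegral.integral_const_mul]

private lemma mem_degreeLT_of_natDegree_le {p : Polynomial ℝ} {k : ℕ} (h : p.natDegree ≤ k) :
    p ∈ Polynomial.degreeLT ℝ (k + 1) := by
  rw [Polynomial.mem_degreeLT]
  calc p.degree ≤ (p.natDegree : WithBot ℕ) := Polynomial.degree_le_natDegree
    _ ≤ (k : WithBot ℕ) := by exact_mod_cast h
    _ < ((k + 1 : ℕ) : WithBot ℕ) := by exact_mod_cast Nat.lt_succ_self k

private lemma natDegree_le_of_mem_degreeLT {p : Polynomial ℝ} {k : ℕ}
    (h : p ∈ Polynomial.degreeLT ℝ (k + 1)) : p.natDegree ≤ k := by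
  rw [Polynomial.mem_degreeLT] at h
  rcases eq_or_ne p 0 with rfl | hp
  · simp
  · have := (Polynomial.natDegree_lt_iff_degree_lt hp).mpr h
    omega

/-- existence and uniqueness of the Gauss–Radau projection.
For continuous `w` on `[a,b]` and `k ≥ 1` there is a unique polynomial `p` of degree
at most `k` with `∫_a^b (p − w) q = 0` for all polynomials `q` of degree at most `k−1`
and `p(b) = w(b)`. -/
theorem statement9 (a b : ℝ) (hab : a < b) (k : ℕ) (hk : 1 ≤ k)
    (w : ℝ → ℝ) (hw : ContinuousOn w (Set.Icc a b)) :
    ∃! p : Polynomial ℝ, p.natDegree ≤ k ∧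
      (∀ q : Polynomial ℝ, q.natDegree ≤ k - 1 →
        ∫ x in a..b, (p.eval x - w x) * q.eval x = 0) ∧
      p.eval b = w b := by
  have huIcc : Set.uIcc a b = Set.Icc a b := Set.uIcc_of_le hab.le
  have hwi : ∀ i : ℕ, IntervalIntegrable (fun x => w x * x ^ i) volume a b := fun i => by
    apply ContinuousOn.intervalIntegrable
    rw [huIcc]
    exact hw.mul (continuous_pow i).continuousOn
  -- injectivity of Tmap
  have hinjT : Function.Injective (Tmap a b k) := by
    rw [← LinearMap.ker_eq_bot, LinearMap.ker_eq_bot']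
    intro p hp
    have h1 : ∀ i : Fin k, ∫ x in a..b, (p : Polynomial ℝ).eval x * x ^ (i : ℕ) = 0 :=
      fun i => congrFun (congrArg Prod.fst hp) i
    have h2 : (p : Polynomial ℝ).eval b = 0 := congrArg Prod.snd hp
    have horth : ∀ q : Polynomial ℝ, q.natDegree ≤ k - 1 →
        ∫ x in a..b, (p : Polynomial ℝ).eval x * q.eval x = 0 := by
      intro q hq
      rw [expand_int a b k _ (poly_int a b _) q (by omega)]
      refine Finset.sum_eq_zero fun i hi => ?_
      rw [h1 ⟨i, Finset.mem_range.mp hi⟩, mul_zero]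
    have := key_inj a b hab k _ (natDegree_le_of_mem_degreeLT p.2) horth h2
    exact Subtype.ext this
  -- surjectivity
  have hfr : Module.finrank ℝ (Polynomial.degreeLT ℝ (k + 1))
      = Module.finrank ℝ ((Fin k → ℝ) × ℝ) := by
    rw [(Polynomial.degreeLTEquiv ℝ (k + 1)).finrank_eq]
    simp
  haveI : FiniteDimensional ℝ (Polynomial.degreeLT ℝ (k + 1)) :=
    (Polynomial.degreeLTEquiv ℝ (k + 1)).symm.finiteDimensional
  have hsurjT : Function.Surjective (Tmap a b k) :=
    (LinearMap.injective_iff_surjective_of_finrank_eq_finrank hfr).mp hinjT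
  obtain ⟨p, hp⟩ := hsurjT (fun i => ∫ x in a..b, w x * x ^ (i : ℕ), w b)
  set P : Polynomial ℝ := (p : Polynomial ℝ) with hPdef
  have hmom : ∀ i : Fin k,
      ∫ x in a..b, P.eval x * x ^ (i : ℕ) = ∫ x in a..b, w x * x ^ (i : ℕ) :=
    fun i => congrFun (congrArg Prod.fst hp) i
  have hPb : P.eval b = w b := congrArg Prod.snd hp
  have hPw_int : ∀ i : ℕ, IntervalIntegrable (fun x => (P.eval x - w x) * x ^ i) volume a b :=
    fun i => by
      simp only [sub_mul]
      exact (poly_int a b P i).sub (hwi i)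
  have hPdeg : P.natDegree ≤ k := natDegree_le_of_mem_degreeLT p.2
  have hPorth : ∀ q : Polynomial ℝ, q.natDegree ≤ k - 1 →
      ∫ x in a..b, (P.eval x - w x) * q.eval x = 0 := by
    intro q hq
    rw [expand_int a b k _ hPw_int q (by omega)]
    refine Finset.sum_eq_zero fun i hi => ?_
    have : ∫ x in a..b, (P.eval x - w x) * x ^ i = 0 := by
      simp only [sub_mul]
      rw [intervalIntegral.integral_sub (poly_int a b P i) (hwi i),
        hmom ⟨i, Finset.mem_range.mp hi⟩, sub_self]
    rw [this, mul_zero]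
  refine ⟨P, ⟨hPdeg, hPorth, hPb⟩, ?_⟩
  intro p' ⟨hdeg', horth', hb'⟩
  -- uniqueness
  have hqint : ∀ (r : Polynomial ℝ) (q : Polynomial ℝ),
      IntervalIntegrable (fun x => (r.eval x - w x) * q.eval x) volume a b := fun r q => by
    apply ContinuousOn.intervalIntegrable
    rw [huIcc]
    exact ((r.continuousOn.sub hw).mul q.continuousOn)
  have hdorth : ∀ q : Polynomial ℝ, q.natDegree ≤ k - 1 →
      ∫ x in a..b, (p' - P).eval x * q.eval x = 0 := by
    intro q hq
    have heq : ∀ x : ℝ, (p' - P).eval x * q.eval x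
        = (p'.eval x - w x) * q.eval x - (P.eval x - w x) * q.eval x := fun x => by
      simp only [Polynomial.eval_sub]; ring
    simp_rw [heq]
    rw [intervalIntegral.integral_sub (hqint p' q) (hqint P q), horth' q hq, hPorth q hq,
      sub_self]
  have hddeg : (p' - P).natDegree ≤ k :=
    le_trans (Polynomial.natDegree_sub_le p' P) (max_le hdeg' hPdeg)
  have hdb : (p' - P).eval b = 0 := by
    simp [hb', hPb]
  have := key_inj a b hab k _ hddeg hdorth hdb
  exact sub_eq_zero.mp this
end

section
/- Let a < b be real numbers with h = b − a, let k ≥ 1 be an integer, and let w : [a,b] → ℝ be (k+1)-times continuously differentiable. Let p be the Gauss–Radau projection of w, i.e. the polynomial of degree at most k with ∫_a^b (p − w)q = 0 for every polynomial q of degree at most k−1 and p(b) = w(b). Then there exists a constant C > 0 depending only on k such that ‖w − p‖_{L²(a,b)} + h^(1/2)·sup_{x∈[a,b]}|w(x) − p(x)| ≤ C h^(k+1) ‖w^(k+1)‖_{L²(a,b)}. -/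
open MeasureTheory

open scoped ENNReal
open scoped Nat

namespace St10

noncomputable def Pc (n : ℕ) (c : Fin n → ℝ) : Polynomial ℝ :=
  ∑ i : Fin n, Polynomial.C (c i) * Polynomial.X ^ (i : ℕ)

lemma Pc_eval (n : ℕ) (c : Fin n → ℝ) (x : ℝ) :
    (Pc n c).eval x = ∑ i : Fin n, c i * x ^ (i : ℕ) := by
  simp [Pc, Polynomial.eval_finset_sum]

lemma Pc_natDegree_le (n : ℕ) (c : Fin (n + 1) → ℝ) : (Pc (n + 1) c).natDegree ≤ n := by
  refine Polynomial.natDegree_sum_le_of_forall_le _ _ fun i _ => ?_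
  refine (Polynomial.natDegree_C_mul_le _ _).trans ?_
  simpa using Nat.lt_succ_iff.mp i.isLt

lemma Pc_coeff (n : ℕ) (c : Fin n → ℝ) (j : Fin n) : (Pc n c).coeff (j : ℕ) = c j := by
  simp only [Pc, Polynomial.finset_sum_coeff, Polynomial.coeff_C_mul, Polynomial.coeff_X_pow]
  rw [Finset.sum_eq_single j]
  · simp
  · intro i _ hij
    have : (j : ℕ) ≠ (i : ℕ) := fun hc => hij (Fin.ext hc).symm
    simp [this]
  · simp

lemma Pc_moment (n : ℕ) (c : Fin n → ℝ) (j : ℕ) :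
    ∫ t in (0:ℝ)..1, (Pc n c).eval t * t ^ j
      = ∑ i : Fin n, c i * ((i : ℝ) + j + 1)⁻¹ := by
  have hfun : ∀ t : ℝ, (Pc n c).eval t * t ^ j = ∑ i : Fin n, c i * t ^ ((i : ℕ) + j) := by
    intro t
    rw [Pc_eval, Finset.sum_mul]
    exact Finset.sum_congr rfl fun i _ => by rw [pow_add]; ring
  simp only [hfun]
  rw [intervalIntegral.integral_finset_sum (f := fun i t => c i * t ^ ((i : ℕ) + j))
    (fun i _ => ((continuous_const.mul (continuous_pow _)).intervalIntegrable _ _))]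
  refine Finset.sum_congr rfl fun i _ => ?_
  rw [intervalIntegral.integral_const_mul, integral_pow]
  rw [one_pow, zero_pow (by omega), sub_zero, one_div]
  push_cast
  ring_nf


lemma key_inj (k : ℕ) (hk : 1 ≤ k) (c : Fin (k + 1) → ℝ)
    (hmom : ∀ j < k, (∑ i : Fin (k + 1), c i * ((i : ℝ) + j + 1)⁻¹) = 0)
    (hend : (∑ i : Fin (k + 1), c i) = 0) : ∀ i, c i = 0 := by
  have hmom' : ∀ j < k, ∫ x in (0:ℝ)..1, (Pc (k+1) c).eval x * x ^ j = 0 := by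
    intro j hj; rw [Pc_moment]; exact hmom j hj
  set s := Pc (k+1) c with hs
  have hseval1 : s.IsRoot 1 := by
    show s.eval 1 = 0
    rw [hs, Pc_eval]; simpa using hend
  suffices hs0 : s = 0 by
    intro i
    have h1 := Pc_coeff (k+1) c i
    rw [← hs, hs0] at h1
    simpa using h1.symm
  obtain ⟨t, ht⟩ := Polynomial.dvd_iff_isRoot.mpr hseval1
  by_cases ht0 : t = 0
  · rw [ht, ht0, mul_zero]
  exfalso
  have hXC : (Polynomial.X - Polynomial.C (1:ℝ)) ≠ 0 := Polynomial.X_sub_C_ne_zero 1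
  have hsne : s ≠ 0 := by rw [ht]; exact mul_ne_zero hXC ht0
  have hds : s.natDegree ≤ k := hs ▸ Pc_natDegree_le k c
  have hdt : t.natDegree < k := by
    have hnd : s.natDegree = 1 + t.natDegree := by
      rw [ht, Polynomial.natDegree_mul hXC ht0, Polynomial.natDegree_X_sub_C]
    omega
  -- orthogonality against t
  have horth : ∫ x in (0:ℝ)..1, s.eval x * t.eval x = 0 := by
    have hev : ∀ x : ℝ, s.eval x * t.eval x
        = ∑ j ∈ Finset.range k, t.coeff j * (s.eval x * x ^ j) := by
      intro x
      rw [Polynomial.eval_eq_sum_range' hdt x, Finset.mul_sum]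
      exact Finset.sum_congr rfl fun j _ => by ring
    simp only [hev]
    rw [intervalIntegral.integral_finset_sum (f := fun j x => t.coeff j * (s.eval x * x ^ j)) (fun j _ =>
      (continuous_const.mul ((s.continuous.mul (continuous_pow j)))).intervalIntegrable _ _)]
    refine Finset.sum_eq_zero fun j hj => ?_
    rw [intervalIntegral.integral_const_mul, hmom' j (Finset.mem_range.mp hj), mul_zero]
  -- u := s * t is ≤ 0 on [0,1] with zero integral, but u ≠ 0 : contradiction
  set u := s * t with hu
  have hune : u ≠ 0 := mul_ne_zero hsne ht0
  have huint : ∫ x in (0:ℝ)..1, u.eval x = 0 := by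
    simpa [hu, Polynomial.eval_mul] using horth
  have hunonpos : ∀ x ∈ Set.Icc (0:ℝ) 1, u.eval x ≤ 0 := by
    intro x hx
    have : u.eval x = (x - 1) * (t.eval x * t.eval x) := by
      rw [hu, ht]; simp [Polynomial.eval_mul]; ring
    rw [this]
    have h1 : x - 1 ≤ 0 := by linarith [hx.2]
    nlinarith [mul_self_nonneg (t.eval x)]
  have hIoc : ∫ x in Set.Ioc (0:ℝ) 1, (- u.eval x) = 0 := by
    rw [MeasureTheory.integral_neg, neg_eq_zero]
    rw [← intervalIntegral.integral_of_le (zero_le_one)]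
    exact huint
  have hint : IntegrableOn (fun x => - u.eval x) (Set.Ioc (0:ℝ) 1) :=
    (u.continuous.neg).integrableOn_Ioc
  have hnonneg : 0 ≤ᶠ[ae (volume.restrict (Set.Ioc (0:ℝ) 1))] fun x => - u.eval x := by
    filter_upwards [ae_restrict_mem measurableSet_Ioc] with x hx
    have := hunonpos x ⟨hx.1.le, hx.2⟩
    simpa using this
  have hae : (fun x => - u.eval x) =ᶠ[ae (volume.restrict (Set.Ioc (0:ℝ) 1))] 0 :=
    (integral_eq_zero_iff_of_nonneg_ae hnonneg hint).mp hIoc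
  have hnull : volume.restrict (Set.Ioc (0:ℝ) 1) {x | u.eval x ≠ 0} = 0 := by
    have := hae
    rw [Filter.EventuallyEq, MeasureTheory.ae_iff] at this
    simpa [neg_eq_zero] using this
  have hroots : {x : ℝ | u.eval x = 0}.Finite := Polynomial.finite_setOf_isRoot hune
  have hz : volume.restrict (Set.Ioc (0:ℝ) 1) {x | u.eval x = 0} = 0 := by
    refine le_antisymm (le_trans (Measure.restrict_le_self _) ?_) (zero_le)
    rw [hroots.measure_zero volume]
  have huniv : volume.restrict (Set.Ioc (0:ℝ) 1) Set.univ = 1 := by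
    rw [Measure.restrict_apply_univ, Real.volume_Ioc]
    norm_num
  have hcover : (Set.univ : Set ℝ) ⊆ {x | u.eval x = 0} ∪ {x | u.eval x ≠ 0} := by
    intro x _
    by_cases hx : u.eval x = 0
    · exact Or.inl hx
    · exact Or.inr hx
  have : (1 : ℝ≥0∞) ≤ 0 := by
    calc (1 : ℝ≥0∞) = volume.restrict (Set.Ioc (0:ℝ) 1) Set.univ := huniv.symm
    _ ≤ volume.restrict (Set.Ioc (0:ℝ) 1) ({x | u.eval x = 0} ∪ {x | u.eval x ≠ 0}) :=
        measure_mono hcover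
    _ ≤ volume.restrict (Set.Ioc (0:ℝ) 1) {x | u.eval x = 0}
        + volume.restrict (Set.Ioc (0:ℝ) 1) {x | u.eval x ≠ 0} := measure_union_le _ _
    _ = 0 := by rw [hz, hnull, add_zero]
  simp at this

lemma coercive (k : ℕ) (hk : 1 ≤ k) :
    ∃ m : ℝ, 0 < m ∧ ∀ c : Fin (k + 1) → ℝ, (∑ i, c i) = 0 →
      (∑ i, (c i) ^ 2) ≤ m * ∑ j ∈ Finset.range k,
        (∑ i : Fin (k + 1), c i * ((i : ℝ) + j + 1)⁻¹) ^ 2 := by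
  classical
  set Mo : ℕ → (Fin (k + 1) → ℝ) → ℝ :=
    fun j c => ∑ i : Fin (k + 1), c i * ((i : ℝ) + j + 1)⁻¹ with hMo
  set F : (Fin (k + 1) → ℝ) → ℝ := fun c => ∑ j ∈ Finset.range k, (Mo j c) ^ 2 with hF
  set N : (Fin (k + 1) → ℝ) → ℝ := fun c => ∑ i, (c i) ^ 2 with hN
  set L : (Fin (k + 1) → ℝ) → ℝ := fun c => ∑ i, c i with hL
  have hMoc : ∀ j, Continuous (Mo j) := fun j =>
    continuous_finset_sum _ fun i _ => (continuous_apply i).mul continuous_const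
  have hFc : Continuous F := continuous_finset_sum _ fun j _ => (hMoc j).pow 2
  have hNc : Continuous N := continuous_finset_sum _ fun i _ => (continuous_apply i).pow 2
  have hLc : Continuous L := continuous_finset_sum _ fun i _ => continuous_apply i
  have hFnn : ∀ c, 0 ≤ F c := fun c => Finset.sum_nonneg fun j _ => sq_nonneg _
  have hNnn : ∀ c, 0 ≤ N c := fun c => Finset.sum_nonneg fun i _ => sq_nonneg _
  -- homogeneity facts
  have hMo_smul : ∀ (j) (lam : ℝ) (c), Mo j (fun i => lam * c i) = lam * Mo j c := by
    intro j lam c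
    rw [hMo, Finset.mul_sum]
    exact Finset.sum_congr rfl fun i _ => by ring
  have hF_smul : ∀ (lam : ℝ) (c), F (fun i => lam * c i) = lam ^ 2 * F c := by
    intro lam c
    rw [hF, Finset.mul_sum]
    refine Finset.sum_congr rfl fun j _ => ?_
    rw [hMo_smul]; ring
  have hN_smul : ∀ (lam : ℝ) (c), N (fun i => lam * c i) = lam ^ 2 * N c := by
    intro lam c
    rw [hN, Finset.mul_sum]
    exact Finset.sum_congr rfl fun i _ => by ring
  have hL_smul : ∀ (lam : ℝ) (c), L (fun i => lam * c i) = lam * L c := by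
    intro lam c
    rw [hL, Finset.mul_sum]
  set S : Set (Fin (k + 1) → ℝ) := {c | N c = 1 ∧ L c = 0} with hS
  have hScl : IsClosed S := (isClosed_eq hNc continuous_const).inter (isClosed_eq hLc continuous_const)
  have hSsub : S ⊆ Metric.closedBall 0 1 := by
    intro c hc
    rw [Metric.mem_closedBall, dist_zero_right]
    rw [pi_norm_le_iff_of_nonneg zero_le_one]
    intro i
    have h1 : (c i) ^ 2 ≤ N c :=
      Finset.single_le_sum (f := fun i => (c i) ^ 2) (fun i _ => sq_nonneg _) (Finset.mem_univ i)
    rw [hc.1] at h1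
    rw [Real.norm_eq_abs]
    nlinarith [abs_nonneg (c i), sq_abs (c i)]
  have hScomp : IsCompact S :=
    Metric.isCompact_of_isClosed_isBounded hScl (Metric.isBounded_closedBall.subset hSsub)
  -- normalization: for c with L c = 0 and N c ≠ 0, normalized version lies in S
  have hnorm : ∀ c : Fin (k + 1) → ℝ, L c = 0 → N c ≠ 0 →
      (fun i => (Real.sqrt (N c))⁻¹ * c i) ∈ S ∧
      F (fun i => (Real.sqrt (N c))⁻¹ * c i) = (N c)⁻¹ * F c := by
    intro c hLc0 hNc0
    have hNpos : 0 < N c := lt_of_le_of_ne (hNnn c) (Ne.symm hNc0)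
    have hsq : Real.sqrt (N c) ^ 2 = N c := Real.sq_sqrt hNpos.le
    have hsp : 0 < Real.sqrt (N c) := Real.sqrt_pos.mpr hNpos
    refine ⟨⟨?_, ?_⟩, ?_⟩
    · rw [hN_smul]
      rw [inv_pow, hsq]
      field_simp
    · rw [hL_smul, hLc0, mul_zero]
    · rw [hF_smul, inv_pow, hsq]
  by_cases hSne : S.Nonempty
  · obtain ⟨c₀, hc₀S, hmin⟩ := hScomp.exists_isMinOn hSne hFc.continuousOn
    have hFc₀pos : 0 < F c₀ := by
      rcases lt_or_eq_of_le (hFnn c₀) with h | h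
      · exact h
      · exfalso
        have hall : ∀ j < k, Mo j c₀ = 0 := by
          intro j hj
          have := (Finset.sum_eq_zero_iff_of_nonneg
            (fun j _ => sq_nonneg (Mo j c₀))).mp h.symm j (Finset.mem_range.mpr hj)
          exact pow_eq_zero_iff (n := 2) (by norm_num) |>.mp this
        have hz := key_inj k hk c₀ hall hc₀S.2
        have : N c₀ = 0 := by
          rw [hN]
          exact Finset.sum_eq_zero fun i _ => by rw [hz i]; ring
        rw [hc₀S.1] at this
        norm_num at this
    refine ⟨(F c₀)⁻¹, inv_pos.mpr hFc₀pos, ?_⟩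
    intro c hLc0
    by_cases hNc0 : N c = 0
    · calc (∑ i, (c i) ^ 2) = N c := rfl
        _ = 0 := hNc0
        _ ≤ (F c₀)⁻¹ * F c := mul_nonneg (inv_nonneg.mpr (hFnn c₀)) (hFnn c)
    · obtain ⟨hmem, hFval⟩ := hnorm c hLc0 hNc0
      have h1 : F c₀ ≤ (N c)⁻¹ * F c := by
        rw [← hFval]
        exact isMinOn_iff.mp hmin _ hmem
      have hNpos : 0 < N c := lt_of_le_of_ne (hNnn c) (Ne.symm hNc0)
      calc (∑ i, (c i) ^ 2) = N c := rfl
        _ ≤ (F c₀)⁻¹ * F c := by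
            have h2 : N c * F c₀ ≤ F c := by
              calc N c * F c₀ ≤ N c * ((N c)⁻¹ * F c) :=
                    mul_le_mul_of_nonneg_left h1 hNpos.le
                _ = F c := by field_simp
            rw [inv_mul_eq_div, le_div_iff₀ hFc₀pos]
            exact h2
  · refine ⟨1, one_pos, ?_⟩
    intro c hLc0
    by_cases hNc0 : N c = 0
    · calc (∑ i, (c i) ^ 2) = N c := rfl
        _ = 0 := hNc0
        _ ≤ 1 * F c := by rw [one_mul]; exact hFnn c
    · exact absurd ⟨_, (hnorm c hLc0 hNc0).1⟩ hSne

lemma cs_abs {a b : ℝ} (hab : a ≤ b) {f : ℝ → ℝ} (hf : ContinuousOn f (Set.Icc a b)) :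
    ∫ x in a..b, |f x| ≤ Real.sqrt (b - a) * Real.sqrt (∫ x in a..b, (f x) ^ 2) := by
  rcases eq_or_lt_of_le hab with rfl | hlt
  · simp
  have hh0 : 0 < b - a := sub_pos.mpr hlt
  have huIcc : Set.uIcc a b = Set.Icc a b := Set.uIcc_of_le hab
  have hIf : IntervalIntegrable (fun x => |f x|) volume a b :=
    (huIcc ▸ hf.abs : ContinuousOn _ (Set.uIcc a b)).intervalIntegrable
  have hJf : IntervalIntegrable (fun x => (f x) ^ 2) volume a b :=
    (huIcc ▸ (hf.pow 2) : ContinuousOn _ (Set.uIcc a b)).intervalIntegrable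
  set I := ∫ x in a..b, |f x| with hI
  set J := ∫ x in a..b, (f x) ^ 2 with hJ
  have hI0 : 0 ≤ I := intervalIntegral.integral_nonneg hab fun x _ => abs_nonneg _
  have hJ0 : 0 ≤ J := intervalIntegral.integral_nonneg hab fun x _ => sq_nonneg _
  set cc := I / (b - a) with hcc
  have hnn : 0 ≤ ∫ x in a..b, (|f x| - cc) ^ 2 :=
    intervalIntegral.integral_nonneg hab fun x _ => sq_nonneg _
  have hexp : ∫ x in a..b, (|f x| - cc) ^ 2 = J - 2 * cc * I + cc ^ 2 * (b - a) := by
    have hfun : ∀ x : ℝ, (|f x| - cc) ^ 2 = ((f x) ^ 2 - (2 * cc) * |f x|) + cc ^ 2 := by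
      intro x
      have := sq_abs (f x)
      nlinarith [sq_abs (f x)]
    simp only [hfun]
    rw [intervalIntegral.integral_add (hJf.sub (hIf.const_mul _)) (intervalIntegrable_const),
        intervalIntegral.integral_sub hJf (hIf.const_mul _),
        intervalIntegral.integral_const_mul, intervalIntegral.integral_const]
    rw [← hI, ← hJ]
    simp only [smul_eq_mul]
    ring
  have hkey : I ^ 2 ≤ (b - a) * J := by
    rw [hexp] at hnn
    have e1 : cc ^ 2 * (b - a) = I ^ 2 / (b - a) := by
      rw [hcc]; field_simp
    have e2 : 2 * cc * I = 2 * I ^ 2 / (b - a) := by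
      rw [hcc]; field_simp
    rw [e1, e2] at hnn
    rw [show 2 * I ^ 2 / (b - a) = 2 * (I ^ 2 / (b - a)) by ring] at hnn
    rw [← sub_nonneg]
    have : J - I ^ 2 / (b - a) ≥ 0 := by linarith [hnn]
    calc (0:ℝ) ≤ (J - I ^ 2 / (b - a)) * (b - a) := mul_nonneg this hh0.le
      _ = (b - a) * J - I ^ 2 := by field_simp
  calc I ≤ Real.sqrt ((b - a) * J) := by
        rw [← Real.sqrt_sq hI0]
        exact Real.sqrt_le_sqrt hkey
    _ = Real.sqrt (b - a) * Real.sqrt J := Real.sqrt_mul hh0.le _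


end St10


/-- Gauss–Radau projection error. There is `C > 0` depending only
on `k` such that for every interval `[a,b]` with `h = b − a`, every `w ∈ C^{k+1}([a,b])`
and its Gauss–Radau projection `p`,
`‖w − p‖_{L²} + h^{1/2} sup_{[a,b]} |w − p| ≤ C h^{k+1} ‖w^{(k+1)}‖_{L²}`. -/
theorem statement10 (k : ℕ) (hk : 1 ≤ k) :
    ∃ C > (0:ℝ), ∀ a b : ℝ, a < b →
      ∀ w : ℝ → ℝ, ContDiffOn ℝ (k + 1) w (Set.Icc a b) →
        ∀ p : Polynomial ℝ, p.natDegree ≤ k →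
          (∀ q : Polynomial ℝ, q.natDegree ≤ k - 1 →
            ∫ x in a..b, (p.eval x - w x) * q.eval x = 0) →
          p.eval b = w b →
          Real.sqrt (∫ x in a..b, (w x - p.eval x) ^ 2)
            + Real.sqrt (b - a) * (⨆ x ∈ Set.Icc a b, |w x - p.eval x|) ≤
            C * (b - a) ^ (k + 1) *
              Real.sqrt (∫ x in a..b,
                (iteratedDerivWithin (k + 1) w (Set.Icc a b) x) ^ 2) := by
  obtain ⟨m, hm, hco⟩ := St10.coercive k hk
  set γ := Real.sqrt (((k : ℝ) + 1) * m * k) with hγ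
  have hγ0 : 0 ≤ γ := Real.sqrt_nonneg _
  refine ⟨2 * (1 + γ), by positivity, ?_⟩
  intro a b hab w hw p hpdeg horth hpb
  have hh0 : (0:ℝ) < b - a := sub_pos.mpr hab
  have hne : b - a ≠ 0 := ne_of_gt hh0
  have hUD : UniqueDiffOn ℝ (Set.Icc a b) := uniqueDiffOn_Icc hab
  set f := iteratedDerivWithin (k + 1) w (Set.Icc a b) with hfdef
  have hfc : ContinuousOn f (Set.Icc a b) :=
    hw.continuousOn_iteratedDerivWithin (by exact_mod_cast le_rfl) hUD
  have hwc : ContinuousOn w (Set.Icc a b) := hw.continuousOn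
  -- interval integrability helper
  have hII : ∀ {g : ℝ → ℝ}, ContinuousOn g (Set.Icc a b) → ∀ u v, u ∈ Set.Icc a b →
      v ∈ Set.Icc a b → IntervalIntegrable g volume u v := by
    intro g hg u v hu hv
    exact (hg.mono (Set.uIcc_subset_Icc hu hv)).intervalIntegrable
  have hmema : a ∈ Set.Icc a b := Set.left_mem_Icc.mpr hab.le
  have hmemb : b ∈ Set.Icc a b := Set.right_mem_Icc.mpr hab.le
  set W := Real.sqrt (∫ x in a..b, (f x) ^ 2) with hW
  have hW0 : 0 ≤ W := Real.sqrt_nonneg _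
  set G := (b - a) ^ k * (Real.sqrt (b - a) * W) with hG
  have hG0 : 0 ≤ G := by positivity
  have hfabs : ∫ x in a..b, |f x| ≤ Real.sqrt (b - a) * W := St10.cs_abs hab.le hfc
  -- Taylor polynomial at b
  set R : Polynomial ℝ := ∑ i ∈ Finset.range (k + 1),
    Polynomial.C ((i ! : ℝ)⁻¹ * iteratedDerivWithin i w (Set.Icc a b) b)
      * (Polynomial.X - Polynomial.C b) ^ i with hR
  have hReval : ∀ x : ℝ, R.eval x = taylorWithinEval w k (Set.Icc a b) b x := by
    intro x
    rw [taylor_within_apply]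
    rw [hR, Polynomial.eval_finset_sum]
    refine Finset.sum_congr rfl fun i _ => ?_
    simp only [Polynomial.eval_mul, Polynomial.eval_pow, Polynomial.eval_sub,
      Polynomial.eval_X, Polynomial.eval_C, smul_eq_mul]
    ring
  have hRdeg : R.natDegree ≤ k := by
    refine Polynomial.natDegree_sum_le_of_forall_le _ _ fun i hi => ?_
    refine (Polynomial.natDegree_C_mul_le _ _).trans ?_
    rw [Polynomial.natDegree_pow, Polynomial.natDegree_X_sub_C, mul_one]
    exact Nat.lt_succ_iff.mp (Finset.mem_range.mp hi)
  have hRb : R.eval b = w b := by rw [hReval]; exact taylorWithinEval_self _ _ _ _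
  have hRc : ContinuousOn (fun x => R.eval x) (Set.Icc a b) := R.continuous.continuousOn
  -- Taylor remainder bound
  have hwk : ContDiffOn ℝ k w (Set.Icc a b) := hw.of_le (by exact_mod_cast Nat.le_succ k)
  have hf' : DifferentiableOn ℝ (iteratedDerivWithin k w (Set.Icc a b)) (Set.Ioo a b) :=
    (hw.differentiableOn_iteratedDerivWithin (by exact_mod_cast Nat.lt_succ_self k) hUD).mono
      Set.Ioo_subset_Icc_self
  have hTay : ∀ x ∈ Set.Icc a b, |w x - R.eval x| ≤ G := by
    intro x hx
    have hTay0 : |w x - R.eval x| ≤ (b - a) ^ k * ∫ y in a..b, |f y| := by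
      rcases eq_or_lt_of_le hx.2 with rfl | hxb
      · rw [hRb, sub_self, abs_zero]
        exact mul_nonneg (by positivity)
          (intervalIntegral.integral_nonneg hab.le fun _ _ => abs_nonneg _)
      · set PH := fun t => taylorWithinEval w k (Set.Icc a b) t x with hPH
        set ψ := fun t => ((k ! : ℝ)⁻¹ * (x - t) ^ k) * f t with hψ
        have hψc : ContinuousOn ψ (Set.Icc a b) :=
          (continuousOn_const.mul ((continuousOn_const.sub continuousOn_id).pow k)).mul hfc
        have hFTC : ∫ t in x..b, ψ t = PH b - PH x := by
          apply intervalIntegral.integral_eq_sub_of_hasDeriv_right_of_le hxb.le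
          · exact (continuousOn_taylorWithinEval hUD hwk).mono (Set.Icc_subset_Icc_left hx.1)
          · intro t ht
            have ht' : t ∈ Set.Ioo a b := ⟨lt_of_le_of_lt hx.1 ht.1, ht.2⟩
            have h2 : HasDerivAt PH (((k ! : ℝ)⁻¹ * (x - t) ^ k) * f t) t := by
              simpa [hψ, smul_eq_mul] using taylorWithinEval_hasDerivAt_Ioo x hab ht' hwk hf'
            exact h2.hasDerivWithinAt
          · exact hII hψc x b hx hmemb
        have hPHx : PH x = w x := taylorWithinEval_self _ _ _ _
        have hPHb : PH b = R.eval x := (hReval x).symm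
        have heq : w x - R.eval x = -(∫ t in x..b, ψ t) := by
          rw [hFTC, hPHx, hPHb]; ring
        rw [heq, abs_neg]
        have h1 : |∫ t in x..b, ψ t| ≤ ∫ t in x..b, |ψ t| :=
          intervalIntegral.abs_integral_le_integral_abs hxb.le
        have h2 : ∫ t in x..b, |ψ t| ≤ ∫ t in x..b, (b - a) ^ k * |f t| := by
          apply intervalIntegral.integral_mono_on hxb.le
          · exact hII hψc.abs x b hx hmemb
          · exact hII (continuousOn_const.mul hfc.abs) x b hx hmemb
          · intro t ht
            have htab : t ∈ Set.Icc a b := ⟨hx.1.trans ht.1, ht.2⟩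
            rw [hψ, abs_mul]
            have e1 : |(k ! : ℝ)⁻¹ * (x - t) ^ k| ≤ (b - a) ^ k := by
              rw [abs_mul]
              have ha1 : |(k ! : ℝ)⁻¹| ≤ 1 := by
                rw [abs_of_nonneg (by positivity)]
                apply inv_le_one_of_one_le₀
                exact_mod_cast Nat.one_le_iff_ne_zero.mpr (Nat.factorial_ne_zero k)
              have ha2 : |(x - t) ^ k| ≤ (b - a) ^ k := by
                rw [abs_pow]
                apply pow_le_pow_left₀ (abs_nonneg _)
                rw [abs_sub_comm, abs_of_nonneg (sub_nonneg.mpr ht.1)]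
                have := ht.2; have := hx.1; linarith
              calc |(k ! : ℝ)⁻¹| * |(x - t) ^ k| ≤ 1 * (b - a) ^ k :=
                    mul_le_mul ha1 ha2 (abs_nonneg _) zero_le_one
                _ = (b - a) ^ k := one_mul _
            exact mul_le_mul_of_nonneg_right e1 (abs_nonneg _)
        have h3 : ∫ t in x..b, (b - a) ^ k * |f t| = (b - a) ^ k * ∫ t in x..b, |f t| :=
          intervalIntegral.integral_const_mul _ _
        have h4 : ∫ t in x..b, |f t| ≤ ∫ t in a..b, |f t| := by
          rw [← intervalIntegral.integral_add_adjacent_intervals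
            (hII hfc.abs a x hmema hx) (hII hfc.abs x b hx hmemb)]
          have h5 : 0 ≤ ∫ t in a..x, |f t| :=
            intervalIntegral.integral_nonneg hx.1 fun _ _ => abs_nonneg _
          linarith
        calc |∫ t in x..b, ψ t| ≤ ∫ t in x..b, |ψ t| := h1
          _ ≤ ∫ t in x..b, (b - a) ^ k * |f t| := h2
          _ = (b - a) ^ k * ∫ t in x..b, |f t| := h3
          _ ≤ (b - a) ^ k * ∫ t in a..b, |f t| :=
              mul_le_mul_of_nonneg_left h4 (by positivity)
    refine hTay0.trans ?_
    rw [hG]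
    exact mul_le_mul_of_nonneg_left hfabs (by positivity)
  -- the polynomial d = p - R and its rescaling
  set d := p - R with hd
  have hddeg : d.natDegree ≤ k := le_trans (Polynomial.natDegree_sub_le p R)
    (max_le hpdeg hRdeg)
  have hdb : d.eval b = 0 := by
    rw [hd, Polynomial.eval_sub, hpb, hRb, sub_self]
  have hdc : ContinuousOn (fun x => d.eval x) (Set.Icc a b) := d.continuous.continuousOn
  set σ := d.comp (Polynomial.C (b - a) * Polynomial.X + Polynomial.C a) with hσ
  have hσdeg : σ.natDegree ≤ k := by
    rw [hσ, Polynomial.natDegree_comp, Polynomial.natDegree_linear hne, mul_one]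
    exact hddeg
  set c : Fin (k + 1) → ℝ := fun i => σ.coeff i with hc
  have hceval : ∀ t : ℝ, (St10.Pc (k + 1) c).eval t = d.eval ((b - a) * t + a) := by
    intro t
    have h1 : σ.eval t = d.eval ((b - a) * t + a) := by
      rw [hσ, Polynomial.eval_comp]
      simp
    rw [St10.Pc_eval, ← h1, Polynomial.eval_eq_sum_range' (Nat.lt_succ_of_le hσdeg) t,
      ← Fin.sum_univ_eq_sum_range (fun i => σ.coeff i * t ^ i) (k + 1)]
  have hsum0 : (∑ i, c i) = 0 := by
    have h1 : (St10.Pc (k + 1) c).eval 1 = d.eval b := by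
      rw [hceval, show (b - a) * 1 + a = b by ring]
    rw [St10.Pc_eval] at h1
    simpa [hdb] using h1
  -- moment bounds
  have hMo : ∀ j < k, |∑ i : Fin (k + 1), c i * ((i : ℝ) + j + 1)⁻¹| ≤ G := by
    intro j hj
    set qj : Polynomial ℝ := (Polynomial.C (b - a)⁻¹ * (Polynomial.X - Polynomial.C a)) ^ j
      with hqj
    have hCne : (Polynomial.C (b - a)⁻¹ : Polynomial ℝ) ≠ 0 :=
      Polynomial.C_ne_zero.mpr (inv_ne_zero hne)
    have hqjdeg : qj.natDegree ≤ k - 1 := by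
      rw [hqj, Polynomial.natDegree_pow,
        Polynomial.natDegree_mul hCne (Polynomial.X_sub_C_ne_zero a),
        Polynomial.natDegree_C, Polynomial.natDegree_X_sub_C]
      omega
    have hqeval : ∀ y : ℝ, qj.eval y = ((y - a) / (b - a)) ^ j := by
      intro y
      rw [hqj]
      simp [div_eq_inv_mul]
    have hqc : ContinuousOn (fun y => qj.eval y) (Set.Icc a b) := qj.continuous.continuousOn
    have step1 : (∑ i : Fin (k + 1), c i * ((i : ℝ) + j + 1)⁻¹)
        = ∫ t in (0:ℝ)..1, (St10.Pc (k + 1) c).eval t * t ^ j :=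
      (St10.Pc_moment _ _ _).symm
    have step2 : (∫ t in (0:ℝ)..1, (St10.Pc (k + 1) c).eval t * t ^ j)
        = (b - a)⁻¹ * ∫ y in a..b, d.eval y * qj.eval y := by
      have hfun : ∀ t : ℝ, (St10.Pc (k + 1) c).eval t * t ^ j
          = (fun y => d.eval y * qj.eval y) ((b - a) * t + a) := by
        intro t
        rw [hceval]
        simp only [hqeval]
        congr 1
        rw [show (b - a) * t + a - a = (b - a) * t by ring]
        field_simp
      simp only [hfun]
      rw [intervalIntegral.integral_comp_mul_add (fun y => d.eval y * qj.eval y) hne a]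
      rw [show (b - a) * 0 + a = a by ring, show (b - a) * 1 + a = b by ring,
        smul_eq_mul]
    have step3 : ∫ y in a..b, d.eval y * qj.eval y
        = ∫ y in a..b, (w y - R.eval y) * qj.eval y := by
      have hsplit : ∀ y : ℝ, d.eval y * qj.eval y
          = (p.eval y - w y) * qj.eval y + (w y - R.eval y) * qj.eval y := by
        intro y
        rw [hd, Polynomial.eval_sub]
        ring
      simp only [hsplit]
      rw [intervalIntegral.integral_add (f := fun y => (p.eval y - w y) * qj.eval y)
        (g := fun y => (w y - R.eval y) * qj.eval y)
        (hII (((hwc.neg.add (p.continuous.continuousOn)).congr (fun y _ => by simp only [Pi.add_apply, Pi.neg_apply]; ring)).mul hqc) a b hmema hmemb)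
        (hII ((hwc.sub hRc).mul hqc) a b hmema hmemb),
        horth qj hqjdeg, zero_add]
    have step4 : |∫ y in a..b, (w y - R.eval y) * qj.eval y| ≤ (b - a) * G := by
      refine (intervalIntegral.abs_integral_le_integral_abs hab.le).trans ?_
      have hmono : ∫ y in a..b, |(w y - R.eval y) * qj.eval y| ≤ ∫ _y in a..b, G := by
        apply intervalIntegral.integral_mono_on (f := fun y => |(w y - R.eval y) * qj.eval y|) hab.le
          (hII ((hwc.sub hRc).mul hqc).abs a b hmema hmemb) intervalIntegrable_const
        intro y hy
        rw [abs_mul]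
        have e1 := hTay y hy
        have e2 : |qj.eval y| ≤ 1 := by
          rw [hqeval, abs_pow]
          apply pow_le_one₀ (abs_nonneg _)
          rw [abs_of_nonneg (div_nonneg (sub_nonneg.mpr hy.1) hh0.le), div_le_one hh0]
          linarith [hy.2]
        calc |w y - R.eval y| * |qj.eval y| ≤ G * 1 :=
              mul_le_mul e1 e2 (abs_nonneg _) hG0
          _ = G := mul_one _
      refine hmono.trans ?_
      rw [intervalIntegral.integral_const, smul_eq_mul]
    rw [step1, step2, step3]
    rw [abs_mul, abs_of_nonneg (inv_nonneg.mpr hh0.le)]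
    calc (b - a)⁻¹ * |∫ y in a..b, (w y - R.eval y) * qj.eval y|
        ≤ (b - a)⁻¹ * ((b - a) * G) :=
          mul_le_mul_of_nonneg_left step4 (inv_nonneg.mpr hh0.le)
      _ = G := by field_simp
  -- coefficient bound
  have hNF : (∑ i, (c i) ^ 2) ≤ m * ((k : ℝ) * G ^ 2) := by
    refine (hco c hsum0).trans (mul_le_mul_of_nonneg_left ?_ hm.le)
    calc (∑ j ∈ Finset.range k, (∑ i : Fin (k + 1), c i * ((i : ℝ) + j + 1)⁻¹) ^ 2)
        ≤ ∑ _j ∈ Finset.range k, G ^ 2 := by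
          refine Finset.sum_le_sum fun j hj => ?_
          have := hMo j (Finset.mem_range.mp hj)
          calc (∑ i : Fin (k + 1), c i * ((i : ℝ) + j + 1)⁻¹) ^ 2
              = |∑ i : Fin (k + 1), c i * ((i : ℝ) + j + 1)⁻¹| ^ 2 := (sq_abs _).symm
            _ ≤ G ^ 2 := pow_le_pow_left₀ (abs_nonneg _) this 2
      _ = (k : ℝ) * G ^ 2 := by
          rw [Finset.sum_const, Finset.card_range, nsmul_eq_mul]
  -- pointwise bound on d
  have hdbound : ∀ x ∈ Set.Icc a b, |d.eval x| ≤ γ * G := by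
    intro x hx
    set t := (x - a) / (b - a) with htdef
    have ht0 : 0 ≤ t := div_nonneg (sub_nonneg.mpr hx.1) hh0.le
    have ht1 : t ≤ 1 := by rw [htdef, div_le_one hh0]; linarith [hx.2]
    have hxt : (b - a) * t + a = x := by
      rw [htdef]; field_simp; ring
    have hdx : d.eval x = ∑ i : Fin (k + 1), c i * t ^ (i : ℕ) := by
      rw [← hxt, ← hceval, St10.Pc_eval]
    rw [hdx]
    have e1 : |∑ i : Fin (k + 1), c i * t ^ (i : ℕ)| ≤ ∑ i : Fin (k + 1), |c i| := by
      refine (Finset.abs_sum_le_sum_abs _ _).trans (Finset.sum_le_sum fun i _ => ?_)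
      rw [abs_mul]
      have e2 : |t ^ (i : ℕ)| ≤ 1 := by
        rw [abs_pow]
        exact pow_le_one₀ (abs_nonneg _) (by rw [abs_of_nonneg ht0]; exact ht1)
      calc |c i| * |t ^ (i : ℕ)| ≤ |c i| * 1 := mul_le_mul_of_nonneg_left e2 (abs_nonneg _)
        _ = |c i| := mul_one _
    have e3 : (∑ i : Fin (k + 1), |c i|) ^ 2 ≤ ((k : ℝ) + 1) * ∑ i, (c i) ^ 2 := by
      have := sq_sum_le_card_mul_sum_sq (s := (Finset.univ : Finset (Fin (k + 1))))
        (f := fun i => |c i|)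
      simp only [sq_abs, Finset.card_univ, Fintype.card_fin] at this
      refine this.trans (le_of_eq ?_)
      push_cast
      ring
    have e4 : |∑ i : Fin (k + 1), c i * t ^ (i : ℕ)| ^ 2 ≤ (((k : ℝ) + 1) * m * k) * G ^ 2 := by
      calc |∑ i : Fin (k + 1), c i * t ^ (i : ℕ)| ^ 2
          ≤ (∑ i : Fin (k + 1), |c i|) ^ 2 := pow_le_pow_left₀ (abs_nonneg _) e1 2
        _ ≤ ((k : ℝ) + 1) * ∑ i, (c i) ^ 2 := e3
        _ ≤ ((k : ℝ) + 1) * (m * ((k : ℝ) * G ^ 2)) :=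
            mul_le_mul_of_nonneg_left hNF (by positivity)
        _ = (((k : ℝ) + 1) * m * k) * G ^ 2 := by ring
    have e5 : |∑ i : Fin (k + 1), c i * t ^ (i : ℕ)|
        ≤ Real.sqrt ((((k : ℝ) + 1) * m * k) * G ^ 2) := by
      rw [← Real.sqrt_sq (abs_nonneg _)]
      exact Real.sqrt_le_sqrt e4
    refine e5.trans (le_of_eq ?_)
    rw [Real.sqrt_mul (by positivity), Real.sqrt_sq hG0, hγ]
  -- pointwise bound on w - p
  have hwp : ∀ x ∈ Set.Icc a b, |w x - p.eval x| ≤ (1 + γ) * G := by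
    intro x hx
    have heq : w x - p.eval x = (w x - R.eval x) - d.eval x := by
      rw [hd, Polynomial.eval_sub]; ring
    rw [heq]
    calc |(w x - R.eval x) - d.eval x| ≤ |w x - R.eval x| + |d.eval x| := abs_sub _ _
      _ ≤ G + γ * G := add_le_add (hTay x hx) (hdbound x hx)
      _ = (1 + γ) * G := by ring
  -- L² part
  have hsq : Real.sqrt (∫ x in a..b, (w x - p.eval x) ^ 2)
      ≤ Real.sqrt (b - a) * ((1 + γ) * G) := by
    have hle : ∫ x in a..b, (w x - p.eval x) ^ 2 ≤ ∫ _x in a..b, ((1 + γ) * G) ^ 2 := by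
      apply intervalIntegral.integral_mono_on hab.le
        (hII ((hwc.sub (p.continuous.continuousOn)).pow 2) a b hmema hmemb)
        intervalIntegrable_const
      intro x hx
      calc (w x - p.eval x) ^ 2 = |w x - p.eval x| ^ 2 := (sq_abs _).symm
        _ ≤ ((1 + γ) * G) ^ 2 := pow_le_pow_left₀ (abs_nonneg _) (hwp x hx) 2
    have hceq : ∫ _x in a..b, ((1 + γ) * G) ^ 2 = (b - a) * ((1 + γ) * G) ^ 2 := by
      rw [intervalIntegral.integral_const, smul_eq_mul]
    calc Real.sqrt (∫ x in a..b, (w x - p.eval x) ^ 2)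
        ≤ Real.sqrt ((b - a) * ((1 + γ) * G) ^ 2) :=
          Real.sqrt_le_sqrt (hle.trans_eq hceq)
      _ = Real.sqrt (b - a) * ((1 + γ) * G) := by
          rw [Real.sqrt_mul hh0.le, Real.sqrt_sq (by positivity)]
  -- sup part
  have hsup : (⨆ x ∈ Set.Icc a b, |w x - p.eval x|) ≤ (1 + γ) * G := by
    refine Real.iSup_le (fun x => Real.iSup_le (fun hx => hwp x hx) (by positivity))
      (by positivity)
  -- conclusion
  have hfinal : Real.sqrt (b - a) * ((1 + γ) * G) + Real.sqrt (b - a) * ((1 + γ) * G)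
      = 2 * (1 + γ) * (b - a) ^ (k + 1) * W := by
    have hss : Real.sqrt (b - a) * Real.sqrt (b - a) = b - a := Real.mul_self_sqrt hh0.le
    rw [hG, pow_succ]
    linear_combination (2 * (1 + γ) * (b - a) ^ k * W) * hss
  calc Real.sqrt (∫ x in a..b, (w x - p.eval x) ^ 2)
      + Real.sqrt (b - a) * (⨆ x ∈ Set.Icc a b, |w x - p.eval x|)
      ≤ Real.sqrt (b - a) * ((1 + γ) * G) + Real.sqrt (b - a) * ((1 + γ) * G) :=
        add_le_add hsq (mul_le_mul_of_nonneg_left hsup (Real.sqrt_nonneg _))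
    _ = 2 * (1 + γ) * (b - a) ^ (k + 1) * W := hfinal
end

section
/- Let a < b be real numbers with h = b − a and let k ≥ 1 be an integer. Let P be a nonzero polynomial of degree k with ∫_a^b P q = 0 for every polynomial q of degree at most k−1, and suppose a = s_0 < s_1 < ⋯ < s_k = b where s_1, …, s_{k−1} are the zeros of P′. For w : [a,b] → ℝ that is (k+2)-times continuously differentiable, let L_k w be the polynomial of degree at most k with (L_k w)(s_i) = w(s_i) for i = 0, …, k. Then there exists a constant C > 0 depending only on k such that for every polynomial v of degree at most k: |∫_a^b (w′(x) − (L_k w)′(x)) v′(x) dx| ≤ C h^(k+1) ‖w^(k+2)‖_{L²(a,b)} ‖v′‖_{L²(a,b)}. -/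
open MeasureTheory Set

namespace Statement11Aux

lemma contDiff_polyEval (p : Polynomial ℝ) {n : WithTop ℕ∞} :
    ContDiff ℝ n fun x : ℝ => p.eval x := by
  induction p using Polynomial.induction_on' with
  | add p q hp hq => simpa [Polynomial.eval_add] using hp.add hq
  | monomial m a =>
      simpa [Polynomial.eval_monomial] using (contDiff_const (c := a)).mul (contDiff_id.pow m)

lemma cs_bound {a b : ℝ} (hab : a < b) (g : ℝ → ℝ) (hg : ContinuousOn g (Icc a b)) :
    (∫ x in a..b, |g x|) ≤ Real.sqrt (b - a) * Real.sqrt (∫ x in a..b, (g x) ^ 2) := by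
  have hab' := hab.le
  have hIcc : uIcc a b = Icc a b := uIcc_of_le hab'
  have hg1 : IntervalIntegrable (fun x => |g x|) volume a b :=
    ContinuousOn.intervalIntegrable (by rw [hIcc]; exact hg.abs)
  have hg2 : IntervalIntegrable (fun x => (g x) ^ 2) volume a b :=
    ContinuousOn.intervalIntegrable (by rw [hIcc]; exact hg.pow 2)
  set A := ∫ x in a..b, |g x| with hA
  set B := ∫ x in a..b, (g x) ^ 2 with hB
  have hA0 : 0 ≤ A := intervalIntegral.integral_nonneg hab' (fun u _ => abs_nonneg _)
  have hB0 : 0 ≤ B := intervalIntegral.integral_nonneg hab' (fun u _ => sq_nonneg _)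
  have hkey : ∀ t : ℝ, 0 ≤ (b - a) * (t * t) + (-(2 * A)) * t + B := by
    intro t
    have hsq : (∫ x in a..b, ((g x) ^ 2 - (2 * t) * |g x| + t ^ 2))
        = B - 2 * t * A + (b - a) * t ^ 2 := by
      rw [intervalIntegral.integral_add (hg2.sub (hg1.const_mul _)) intervalIntegrable_const,
        intervalIntegral.integral_sub hg2 (hg1.const_mul _),
        intervalIntegral.integral_const_mul, intervalIntegral.integral_const]
      simp only [smul_eq_mul]
      rfl
    have hpos : 0 ≤ ∫ x in a..b, ((g x) ^ 2 - (2 * t) * |g x| + t ^ 2) := by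
      have he : ∀ x, (|g x| - t) ^ 2 = (g x) ^ 2 - (2 * t) * |g x| + t ^ 2 := by
        intro x
        have h1 : |g x| ^ 2 = (g x) ^ 2 := sq_abs _
        nlinarith [h1]
      rw [intervalIntegral.integral_congr (g := fun x => (|g x| - t) ^ 2)
        (fun x _ => (he x).symm)]
      exact intervalIntegral.integral_nonneg hab' fun u _ => sq_nonneg _
    rw [hsq] at hpos
    nlinarith [sq_nonneg t]
  have hdisc := discrim_le_zero hkey
  rw [discrim] at hdisc
  have hA2 : A ^ 2 ≤ B * (b - a) := by nlinarith
  calc A = Real.sqrt (A ^ 2) := (Real.sqrt_sq hA0).symm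
    _ ≤ Real.sqrt (B * (b - a)) := Real.sqrt_le_sqrt hA2
    _ = Real.sqrt (b - a) * Real.sqrt B := by
        rw [mul_comm, Real.sqrt_mul (by linarith)]

lemma rolleWithin {a b c d : ℝ} (hcd : c < d) (hc : c ∈ Icc a b) (hd : d ∈ Icc a b)
    (f : ℝ → ℝ) (hf : ContinuousOn f (Icc a b)) (hfcd : f c = f d) :
    ∃ y ∈ Ioo c d, derivWithin f (Icc a b) y = 0 := by
  obtain ⟨y, hy, h0⟩ := exists_deriv_eq_zero hcd (hf.mono (Icc_subset_Icc hc.1 hd.2)) hfcd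
  refine ⟨y, hy, ?_⟩
  rw [derivWithin_of_mem_nhds (Icc_mem_nhds (lt_of_le_of_lt hc.1 hy.1)
    (lt_of_lt_of_le hy.2 hd.2))]
  exact h0

lemma decay {a b : ℝ} (hab : a < b) :
    ∀ (n : ℕ) (f : ℝ → ℝ), ContDiffOn ℝ n f (Icc a b) →
    ∀ t : ℕ → ℝ, (∀ i, i < n → t i ∈ Icc a b) → (∀ i, i + 1 < n → t i < t (i + 1)) →
    (∀ i, i < n → f (t i) = 0) →
    ∀ M : ℝ, 0 ≤ M →
    (∀ x ∈ Icc a b, |iteratedDerivWithin n f (Icc a b) x| ≤ M) →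
    ∀ x ∈ Icc a b, |f x| ≤ (b - a) ^ n * M := by
  intro n
  induction n with
  | zero =>
      intro f _ t _ _ _ M _ hM x hx
      simpa using hM x hx
  | succ n IH =>
      intro f hf t ht hmono hz M hM0 hM x hx
      have hI : UniqueDiffOn ℝ (Icc a b) := uniqueDiffOn_Icc hab
      have hfc : ContinuousOn f (Icc a b) := hf.continuousOn
      have hroll : ∀ i : ℕ, ∃ y : ℝ,
          i < n → y ∈ Ioo (t i) (t (i + 1)) ∧ derivWithin f (Icc a b) y = 0 := by
        intro i
        by_cases hi : i < n
        · obtain ⟨y, hy, h0⟩ := rolleWithin (hmono i (by omega)) (ht i (by omega))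
            (ht (i + 1) (by omega)) f hfc
            (by rw [hz i (by omega), hz (i + 1) (by omega)])
          exact ⟨y, fun _ => ⟨hy, h0⟩⟩
        · exact ⟨0, fun h => absurd h hi⟩
      choose u hu using hroll
      have hd : ContDiffOn ℝ n (derivWithin f (Icc a b)) (Icc a b) :=
        hf.derivWithin hI (by exact_mod_cast le_rfl)
      have key : ∀ y ∈ Icc a b, |derivWithin f (Icc a b) y| ≤ (b - a) ^ n * M := by
        refine IH (derivWithin f (Icc a b)) hd u ?_ ?_ ?_ M hM0 ?_
        · intro i hi
          exact ⟨le_trans (ht i (by omega)).1 ((hu i hi).1).1.le,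
            le_trans ((hu i hi).1).2.le (ht (i + 1) (by omega)).2⟩
        · intro i hi
          exact lt_trans ((hu i (by omega)).1).2 ((hu (i + 1) (by omega)).1).1
        · intro i hi; exact (hu i hi).2
        · intro x hx
          rw [← iteratedDerivWithin_succ']
          exact hM x hx
      have hdiff : DifferentiableOn ℝ f (Icc a b) := by
        apply hf.differentiableOn
        simp
      have ht0 : t 0 ∈ Icc a b := ht 0 (by omega)
      have hmvt := Convex.norm_image_sub_le_of_norm_derivWithin_le hdiff
        (fun y hy => by simpa [Real.norm_eq_abs] using key y hy) (convex_Icc a b) ht0 hx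
      rw [hz 0 (by omega), sub_zero] at hmvt
      have hxd : ‖x - t 0‖ ≤ b - a := by
        rw [Real.norm_eq_abs, abs_le]
        constructor <;> [linarith [hx.1, ht0.2]; linarith [hx.2, ht0.1]]
      calc |f x| = ‖f x‖ := rfl
        _ ≤ (b - a) ^ n * M * ‖x - t 0‖ := hmvt
        _ ≤ (b - a) ^ n * M * (b - a) := by
            apply mul_le_mul_of_nonneg_left hxd
            have hba : (0:ℝ) ≤ b - a := by linarith
            exact mul_nonneg (pow_nonneg hba _) hM0
        _ = (b - a) ^ (n + 1) * M := by ring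

lemma idw_poly {a b : ℝ} (hab : a < b) :
    ∀ (n : ℕ) (T : Polynomial ℝ) {x : ℝ}, x ∈ Icc a b →
      iteratedDerivWithin n (fun y => T.eval y) (Icc a b) x
        = ((Polynomial.derivative (R := ℝ))^[n] T).eval x := by
  have hI : UniqueDiffOn ℝ (Icc a b) := uniqueDiffOn_Icc hab
  intro n
  induction n with
  | zero => intro T x hx; simp
  | succ n IH =>
      intro T x hx
      rw [iteratedDerivWithin_succ,
        derivWithin_congr (fun y hy => IH T hy) (IH T hx),
        Polynomial.derivWithin ((Polynomial.derivative (R := ℝ))^[n] T) (hI x hx),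
        Function.iterate_succ_apply']

lemma idw_sub {a b : ℝ} (hab : a < b) {w : ℝ → ℝ} {N : ℕ}
    (hw : ContDiffOn ℝ N w (Icc a b)) {n : ℕ} (hn : n ≤ N) (T : Polynomial ℝ)
    {x : ℝ} (hx : x ∈ Icc a b) :
    iteratedDerivWithin n (fun y => w y - T.eval y) (Icc a b) x
      = iteratedDerivWithin n w (Icc a b) x - ((Polynomial.derivative (R := ℝ))^[n] T).eval x := by
  have hI : UniqueDiffOn ℝ (Icc a b) := uniqueDiffOn_Icc hab
  have h1 : iteratedDerivWithin n (w - fun y => T.eval y) (Icc a b) x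
      = iteratedDerivWithin n w (Icc a b) x
        - iteratedDerivWithin n (fun y => T.eval y) (Icc a b) x :=
    iteratedDerivWithin_sub hx hI ((hw.contDiffWithinAt hx).of_le (by exact_mod_cast hn))
      ((contDiff_polyEval T).contDiffOn.contDiffWithinAt hx)
  rw [show (fun y => w y - T.eval y) = w - fun y => T.eval y from rfl, h1,
    idw_poly hab n T hx]

lemma iterate_derivative_const {T : Polynomial ℝ} {m : ℕ} (hm : T.natDegree ≤ m) :
    (Polynomial.derivative (R := ℝ))^[m] T
      = Polynomial.C ((m.factorial : ℝ) * T.coeff m) := by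
  have h0 : ((Polynomial.derivative (R := ℝ))^[m] T).natDegree ≤ 0 :=
    le_trans (Polynomial.natDegree_iterate_derivative T m) (by omega)
  rw [Polynomial.eq_C_of_natDegree_le_zero h0, Polynomial.coeff_iterate_derivative]
  congr 1
  rw [zero_add, Nat.descFactorial_self, nsmul_eq_mul]

end Statement11Aux

open Statement11Aux Polynomial

/-- Gauss–Lobatto superconvergence estimate. There is `C > 0`
depending only on `k` such that for every interval `[a,b]`, every degree-`k` polynomial
`P ≢ 0` orthogonal on `[a,b]` to all polynomials of degree at most `k−1`, Gauss–Lobatto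
nodes `a = s₀ < ⋯ < s_k = b` (the interior nodes being zeros of `P'`), every
`w ∈ C^{k+2}([a,b])` with Lagrange interpolant `L_k w` at the nodes, and every
polynomial `v` of degree at most `k`,
`|∫_a^b (w' − (L_k w)') v'| ≤ C h^{k+1} ‖w^{(k+2)}‖_{L²} ‖v'‖_{L²}`. -/
theorem statement11 (k : ℕ) (hk : 1 ≤ k) :
    ∃ C > (0:ℝ), ∀ a b : ℝ, a < b →
      ∀ P : Polynomial ℝ, P ≠ 0 → P.natDegree = k →
        (∀ q : Polynomial ℝ, q.natDegree ≤ k - 1 →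
          ∫ x in a..b, P.eval x * q.eval x = 0) →
        ∀ s : ℕ → ℝ, s 0 = a → s k = b → (∀ i, i < k → s i < s (i + 1)) →
          (∀ i, 1 ≤ i → i ≤ k - 1 → P.derivative.eval (s i) = 0) →
          ∀ w : ℝ → ℝ, ContDiffOn ℝ (k + 2) w (Set.Icc a b) →
            ∀ L : Polynomial ℝ, L.natDegree ≤ k →
              (∀ i, i ≤ k → L.eval (s i) = w (s i)) →
              ∀ v : Polynomial ℝ, v.natDegree ≤ k →
                |∫ x in a..b,
                    (derivWithin w (Set.Icc a b) x - L.derivative.eval x) *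
                      v.derivative.eval x| ≤
                  C * (b - a) ^ (k + 1) *
                    Real.sqrt (∫ x in a..b,
                      (iteratedDerivWithin (k + 2) w (Set.Icc a b) x) ^ 2) *
                    Real.sqrt (∫ x in a..b, (v.derivative.eval x) ^ 2) := by
  refine ⟨1, one_pos, ?_⟩
  intro a b hab P hPne hPdeg hOrth s hs0 hsk hsinc hPz w hw L hLdeg hLint v hvdeg
  set I := Set.Icc a b with hIdef
  have hI : UniqueDiffOn ℝ I := uniqueDiffOn_Icc hab
  have hab' : a ≤ b := hab.le
  have hIcc : uIcc a b = I := uIcc_of_le hab'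
  have hw' : ContDiffOn ℝ ((k + 2 : ℕ) : WithTop ℕ∞) w I := by exact_mod_cast hw
  -- node monotonicity and membership
  have smono : ∀ j, j ≤ k → ∀ i, i ≤ j → s i ≤ s j := by
    intro j
    induction j with
    | zero => intro _ i hi; rw [Nat.le_zero.mp hi]
    | succ j IH =>
        intro hjk i hi
        rcases eq_or_lt_of_le hi with h | h
        · rw [h]
        · exact le_trans (IH (by omega) i (by omega)) (hsinc j (by omega)).le
  have hsI : ∀ i, i ≤ k → s i ∈ I := by
    intro i hi
    exact ⟨hs0 ▸ smono i hi 0 (Nat.zero_le _), hsk ▸ smono k le_rfl i hi⟩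
  -- the polynomial ω
  set ω : Polynomial ℝ := (X - C a) * (X - C b) * P.derivative with hωdef
  have hωnode : ∀ i, i ≤ k → ω.eval (s i) = 0 := by
    intro i hi
    rcases Nat.eq_zero_or_pos i with rfl | h0
    · simp [hωdef, hs0]
    rcases eq_or_lt_of_le hi with rfl | hik
    · simp [hωdef, hsk]
    · have hz := hPz i h0 (by omega)
      simp [hωdef, hz]
  have hPd0 : 0 < P.natDegree := by omega
  have hdegP' := Polynomial.degree_derivative_eq P hPd0
  have hP'ne : P.derivative ≠ 0 := by
    intro h
    rw [h, Polynomial.degree_zero] at hdegP'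
    exact absurd hdegP'.symm (by simp)
  have hP'deg : P.derivative.natDegree = k - 1 := by
    rw [Polynomial.natDegree_eq_of_degree_eq_some hdegP', hPdeg]
  have hXa : (X - C a : Polynomial ℝ) ≠ 0 := Polynomial.X_sub_C_ne_zero a
  have hXb : (X - C b : Polynomial ℝ) ≠ 0 := Polynomial.X_sub_C_ne_zero b
  have hωne : ω ≠ 0 := mul_ne_zero (mul_ne_zero hXa hXb) hP'ne
  have hωdeg : ω.natDegree = k + 1 := by
    rw [hωdef, Polynomial.natDegree_mul (mul_ne_zero hXa hXb) hP'ne,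
      Polynomial.natDegree_mul hXa hXb, Polynomial.natDegree_X_sub_C,
      Polynomial.natDegree_X_sub_C, hP'deg]
    omega
  have hωc : ω.coeff (k + 1) ≠ 0 := by
    rw [← hωdeg, Polynomial.coeff_natDegree]
    exact Polynomial.leadingCoeff_ne_zero.mpr hωne
  -- the modified interpolant T
  set d : ℝ := iteratedDerivWithin (k + 1) w I a with hddef
  set c : ℝ := d / (((k + 1).factorial : ℝ) * ω.coeff (k + 1)) with hcdef
  set T : Polynomial ℝ := L + C c * ω with hTdef
  have hTdeg : T.natDegree ≤ k + 1 := by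
    refine le_trans (Polynomial.natDegree_add_le _ _) (max_le (by omega) ?_)
    refine le_trans (Polynomial.natDegree_mul_le) ?_
    simp [hωdeg]
  have hfact : ((k + 1).factorial : ℝ) ≠ 0 := by
    exact_mod_cast (Nat.factorial_ne_zero (k + 1))
  have hiter : (Polynomial.derivative (R := ℝ))^[k + 1] T = Polynomial.C d := by
    rw [iterate_derivative_const hTdeg]
    congr 1
    have hTc : T.coeff (k + 1) = c * ω.coeff (k + 1) := by
      simp [hTdef, Polynomial.coeff_add, Polynomial.coeff_C_mul,
        Polynomial.coeff_eq_zero_of_natDegree_lt (lt_of_le_of_lt hLdeg (Nat.lt_succ_self k))]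
    rw [hTc, hcdef]
    field_simp
  -- the function G and its derivative
  set G : ℝ → ℝ := fun y => w y - T.eval y with hGdef
  set G' : ℝ → ℝ := derivWithin G I with hG'def
  have hGcd : ContDiffOn ℝ ((k + 2 : ℕ) : WithTop ℕ∞) G I :=
    hw'.sub (contDiff_polyEval T).contDiffOn
  have hGzero : ∀ i, i ≤ k → G (s i) = 0 := by
    intro i hi
    simp only [hGdef, hTdef, Polynomial.eval_add, Polynomial.eval_mul, Polynomial.eval_C,
      hωnode i hi, mul_zero, add_zero, hLint i hi]
    ring
  -- continuity facts
  have hcont2 : ContinuousOn (iteratedDerivWithin (k + 2) w I) I :=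
    hw'.continuousOn_iteratedDerivWithin (by exact_mod_cast le_rfl) hI
  have hcont1 : ContinuousOn (iteratedDerivWithin (k + 1) w I) I :=
    hw'.continuousOn_iteratedDerivWithin (by exact_mod_cast Nat.le_succ (k + 1)) hI
  have hdiff1 : DifferentiableOn ℝ (iteratedDerivWithin (k + 1) w I) I :=
    hw'.differentiableOn_iteratedDerivWithin (by exact_mod_cast Nat.lt_succ_self (k + 1)) hI
  set W : ℝ := Real.sqrt (∫ x in a..b, (iteratedDerivWithin (k + 2) w I x) ^ 2) with hWdef
  set V : ℝ := Real.sqrt (∫ x in a..b, (v.derivative.eval x) ^ 2) with hVdef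
  have hW0 : 0 ≤ W := Real.sqrt_nonneg _
  have hV0 : 0 ≤ V := Real.sqrt_nonneg _
  -- FTC bound on (k+1)-st derivative minus its value at a
  have Fbound : ∀ x ∈ I, |iteratedDerivWithin (k + 1) w I x - d| ≤ Real.sqrt (b - a) * W := by
    intro x hx
    have hax : a ≤ x := hx.1
    have hxb : x ≤ b := hx.2
    have hFTC : iteratedDerivWithin (k + 1) w I x - d
        = ∫ t in a..x, iteratedDerivWithin (k + 2) w I t := by
      rw [hddef]
      refine (intervalIntegral.integral_eq_sub_of_hasDeriv_right_of_le hax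
        (hcont1.mono (Icc_subset_Icc le_rfl hxb)) ?_ ?_).symm
      · intro y hy
        have hyI : y ∈ Ioo a b := ⟨hy.1, lt_of_lt_of_le hy.2 hxb⟩
        have hyI' : y ∈ I := ⟨hyI.1.le, hyI.2.le⟩
        have hdy : DifferentiableWithinAt ℝ (iteratedDerivWithin (k + 1) w I) I y :=
          hdiff1 y hyI'
        have h1 := hdy.hasDerivWithinAt
        have h2 : derivWithin (iteratedDerivWithin (k + 1) w I) I y
            = iteratedDerivWithin (k + 2) w I y :=
          (congrFun iteratedDerivWithin_succ y).symm
        rw [h2] at h1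
        exact (h1.hasDerivAt (Icc_mem_nhds hyI.1 hyI.2)).hasDerivWithinAt
      · exact ContinuousOn.intervalIntegrable
          (by rw [uIcc_of_le hax]; exact hcont2.mono (Icc_subset_Icc le_rfl hxb))
    rw [hFTC]
    calc |∫ t in a..x, iteratedDerivWithin (k + 2) w I t|
        ≤ ∫ t in a..x, |iteratedDerivWithin (k + 2) w I t| :=
          intervalIntegral.abs_integral_le_integral_abs hax
      _ ≤ ∫ t in a..b, |iteratedDerivWithin (k + 2) w I t| :=
          intervalIntegral.integral_mono_interval le_rfl hax hxb
            (Filter.Eventually.of_forall fun t => abs_nonneg _)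
            (ContinuousOn.intervalIntegrable (by rw [hIcc]; exact hcont2.abs))
      _ ≤ Real.sqrt (b - a) * W := cs_bound hab _ hcont2
  -- Rolle: zeros of G'
  have hGcont : ContinuousOn G I := hGcd.continuousOn
  have hroll : ∀ i : ℕ, ∃ y : ℝ, i < k → y ∈ Ioo (s i) (s (i + 1)) ∧ G' y = 0 := by
    intro i
    by_cases hi : i < k
    · obtain ⟨y, hy, h0⟩ := rolleWithin (hsinc i hi) (hsI i (by omega)) (hsI (i + 1) (by omega))
        G hGcont (by rw [hGzero i (by omega), hGzero (i + 1) (by omega)])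
      exact ⟨y, fun _ => ⟨hy, h0⟩⟩
    · exact ⟨0, fun h => absurd h hi⟩
  choose u hu using hroll
  -- decay estimate for G'
  have hG'cd : ContDiffOn ℝ (k : WithTop ℕ∞) G' I := by
    refine hGcd.derivWithin hI ?_
    exact_mod_cast Nat.le_succ (k + 1) |>.trans (by exact_mod_cast le_rfl)
  have hG'bound : ∀ x ∈ I, |G' x| ≤ (b - a) ^ k * (Real.sqrt (b - a) * W) := by
    refine decay hab k G' hG'cd u ?_ ?_ ?_ _ (by positivity) ?_
    · intro i hi
      exact ⟨le_trans (hsI i (by omega)).1 ((hu i hi).1).1.le,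
        le_trans ((hu i hi).1).2.le (hsI (i + 1) (by omega)).2⟩
    · intro i hi
      exact lt_trans ((hu i (by omega)).1).2 ((hu (i + 1) (by omega)).1).1
    · intro i hi; exact (hu i hi).2
    · intro x hx
      rw [hG'def, ← iteratedDerivWithin_succ',
        idw_sub hab hw' (by omega) T hx, hiter, Polynomial.eval_C]
      exact Fbound x hx
  -- vanishing of the polynomial contribution
  have pint : ∀ F G : Polynomial ℝ, IntervalIntegrable (fun x => F.eval x * G.eval x) volume a b :=
    fun F G => (F.continuous.mul G.continuous).intervalIntegrable _ _
  have polyInt : ∀ F : Polynomial ℝ, (∫ x in a..b, F.derivative.eval x) = F.eval b - F.eval a := by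
    intro F
    exact intervalIntegral.integral_eq_sub_of_hasDerivAt (fun x _ => F.hasDerivAt x)
      (F.derivative.continuous.intervalIntegrable _ _)
  have hZero : (∫ x in a..b, ω.derivative.eval x * v.derivative.eval x) = 0 := by
    set v1 := v.derivative with hv1
    set v2 := v1.derivative with hv2
    set ψ : Polynomial ℝ := (X - C a) * (X - C b) * v2 with hψdef
    have hψa : ψ.eval a = 0 := by simp [hψdef]
    have hψb : ψ.eval b = 0 := by simp [hψdef]
    have hωa : ω.eval a = 0 := by simp [hωdef]
    have hωb : ω.eval b = 0 := by simp [hωdef]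
    have hψ'deg : ψ.derivative.natDegree ≤ k - 1 := by
      by_cases h2 : v2 = 0
      · simp [hψdef, h2]
      · have hv1d : 1 ≤ v1.natDegree := by
          rcases Nat.eq_zero_or_pos v1.natDegree with h | h
          · exact absurd (Polynomial.derivative_of_natDegree_zero h) h2
          · exact h
        have hv1k : v1.natDegree ≤ k - 1 :=
          le_trans (Polynomial.natDegree_derivative_le v) (by omega)
        have hv2k : v2.natDegree ≤ k - 2 :=
          le_trans (Polynomial.natDegree_derivative_le v1) (by omega)
        have h12 : ((X - C a) * (X - C b) : Polynomial ℝ).natDegree ≤ 2 :=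
          le_trans Polynomial.natDegree_mul_le (by simp [Polynomial.natDegree_X_sub_C])
        have hψdeg : ψ.natDegree ≤ k :=
          le_trans Polynomial.natDegree_mul_le (by omega)
        exact le_trans (Polynomial.natDegree_derivative_le ψ) (by omega)
    have e1 : (∫ x in a..b, ω.derivative.eval x * v1.eval x)
        + (∫ x in a..b, ω.eval x * v2.eval x) = 0 := by
      have h := polyInt (ω * v1)
      rw [Polynomial.derivative_mul] at h
      simp only [Polynomial.eval_add, Polynomial.eval_mul] at h
      rw [intervalIntegral.integral_add (pint _ _) (pint _ _)] at h
      rw [h]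
      simp [hωa, hωb]
    have e2 : (∫ x in a..b, P.derivative.eval x * ψ.eval x)
        + (∫ x in a..b, P.eval x * ψ.derivative.eval x) = 0 := by
      have h := polyInt (P * ψ)
      rw [Polynomial.derivative_mul] at h
      simp only [Polynomial.eval_add, Polynomial.eval_mul] at h
      rw [intervalIntegral.integral_add (pint _ _) (pint _ _)] at h
      rw [h]
      simp [hψa, hψb]
    have e3 : (∫ x in a..b, P.eval x * ψ.derivative.eval x) = 0 := hOrth _ hψ'deg
    have e4 : (∫ x in a..b, ω.eval x * v2.eval x)
        = ∫ x in a..b, P.derivative.eval x * ψ.eval x := by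
      refine intervalIntegral.integral_congr fun x _ => ?_
      simp only [hωdef, hψdef, Polynomial.eval_mul]
      ring
    rw [hv1] at e1
    linarith [e1, e2, e3, e4]
  -- splitting the main integral
  have hwdiff : DifferentiableOn ℝ w I := hw'.differentiableOn (by
    simp)
  have hGenv : ∀ x ∈ I, (derivWithin w I x - L.derivative.eval x) * v.derivative.eval x
      = G' x * v.derivative.eval x + c * (ω.derivative.eval x * v.derivative.eval x) := by
    intro x hx
    have hux := hI x hx
    have hG'x : G' x = derivWithin w I x - T.derivative.eval x := by
      rw [hG'def, hGdef]
      rw [derivWithin_fun_sub (hwdiff x hx) (T.differentiableWithinAt)]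
      rw [Polynomial.derivWithin T hux]
    have hT' : T.derivative = L.derivative + C c * ω.derivative := by
      simp [hTdef]
    rw [hG'x, hT']
    simp only [Polynomial.eval_add, Polynomial.eval_mul, Polynomial.eval_C]
    ring
  have hG'cont : ContinuousOn G' I := hGcd.continuousOn_derivWithin hI (by
    exact_mod_cast Nat.succ_le_succ (Nat.zero_le (k + 1)))
  have hint1 : IntervalIntegrable (fun x => G' x * v.derivative.eval x) volume a b :=
    ContinuousOn.intervalIntegrable
      (by rw [hIcc]; exact hG'cont.mul v.derivative.continuous.continuousOn)
  have hint2 : IntervalIntegrable (fun x => c * (ω.derivative.eval x * v.derivative.eval x))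
      volume a b := (pint ω.derivative v.derivative).const_mul c
  have hsplit : (∫ x in a..b, (derivWithin w I x - L.derivative.eval x) * v.derivative.eval x)
      = ∫ x in a..b, G' x * v.derivative.eval x := by
    rw [intervalIntegral.integral_congr (g := fun x =>
      G' x * v.derivative.eval x + c * (ω.derivative.eval x * v.derivative.eval x))
      (fun x hx => hGenv x (hIcc ▸ hx))]
    rw [intervalIntegral.integral_add hint1 hint2, intervalIntegral.integral_const_mul,
      hZero, mul_zero, add_zero]
  -- final estimate
  set B : ℝ := (b - a) ^ k * (Real.sqrt (b - a) * W) with hBdef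
  have hB0 : 0 ≤ B := by
    have hba : (0:ℝ) ≤ b - a := by linarith
    exact mul_nonneg (pow_nonneg hba _) (mul_nonneg (Real.sqrt_nonneg _) hW0)
  have habs : IntervalIntegrable (fun x => |v.derivative.eval x|) volume a b :=
    (v.derivative.continuous.abs).intervalIntegrable _ _
  have hintabs : IntervalIntegrable (fun x => |G' x * v.derivative.eval x|) volume a b :=
    ContinuousOn.intervalIntegrable
      (by rw [hIcc]; exact (hG'cont.mul v.derivative.continuous.continuousOn).abs)
  have hmain : |∫ x in a..b, G' x * v.derivative.eval x| ≤ B * (Real.sqrt (b - a) * V) := by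
    calc |∫ x in a..b, G' x * v.derivative.eval x|
        ≤ ∫ x in a..b, |G' x * v.derivative.eval x| :=
          intervalIntegral.abs_integral_le_integral_abs hab'
      _ ≤ ∫ x in a..b, B * |v.derivative.eval x| := by
          refine intervalIntegral.integral_mono_on hab' hintabs (habs.const_mul B) ?_
          intro x hx
          rw [abs_mul]
          exact mul_le_mul_of_nonneg_right (hG'bound x hx) (abs_nonneg _)
      _ = B * ∫ x in a..b, |v.derivative.eval x| := by
          rw [intervalIntegral.integral_const_mul]
      _ ≤ B * (Real.sqrt (b - a) * V) := by
          refine mul_le_mul_of_nonneg_left ?_ hB0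
          exact cs_bound hab _ v.derivative.continuous.continuousOn
  rw [hsplit]
  have hfin : B * (Real.sqrt (b - a) * V) = 1 * (b - a) ^ (k + 1) * W * V := by
    have hs : Real.sqrt (b - a) * Real.sqrt (b - a) = b - a :=
      Real.mul_self_sqrt (by linarith)
    calc B * (Real.sqrt (b - a) * V)
        = (Real.sqrt (b - a) * Real.sqrt (b - a)) * ((b - a) ^ k * W * V) := by
          rw [hBdef]; ring
      _ = (b - a) * ((b - a) ^ k * W * V) := by rw [hs]
      _ = 1 * (b - a) ^ (k + 1) * W * V := by ring
  rw [← hfin]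
  exact hmain
end
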